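/- arXiv:2211.13678 — 9 statements merged into one kernel-verified Lean document; each statement's English description precedes it below -/
import Mathlib

section
/- Let G be a finite abelian group of order n ≥ 2. The 2-critical number χ(G,2), defined as the smallest positive integer m such that every subset of G of size at least m satisfies A + A = G, equals ⌊n/2⌋ + 1. -/
open Finset Pointwise

private lemma upper {G : Type*} [AddCommGroup G] [Fintype G] [DecidableEq G]
    (A : Finset G) (hA : Fintype.card G < 2 * A.card) : A + A = Finset.univ := by
  ext g
  simp only [Finset.mem_univ, iff_true]
  set B : Finset G := A.image (fun a => g - a) with hB
  have hBcard : B.card = A.card := Finset.card_image_of_injective _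
    (fun x y h => by simpa using sub_right_injective h)
  have h1 : (A ∪ B).card + (A ∩ B).card = A.card + B.card :=
    Finset.card_union_add_card_inter A B
  have h2 : (A ∪ B).card ≤ Fintype.card G := Finset.card_le_univ _
  have h3 : 0 < (A ∩ B).card := by omega
  obtain ⟨a, ha⟩ := Finset.card_pos.mp h3
  rw [Finset.mem_inter] at ha
  obtain ⟨c, hc, hca⟩ := Finset.mem_image.mp ha.2
  rw [Finset.mem_add]
  exact ⟨c, hc, a, ha.1, by rw [← hca]; abel⟩

private lemma pick_half {G : Type*} [AddCommGroup G] [DecidableEq G] :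
    ∀ (S : Finset G), (∀ x ∈ S, -x ∈ S) → (∀ x ∈ S, -x ≠ x) →
      ∃ A : Finset G, A ⊆ S ∧ 2 * A.card = S.card ∧ ∀ a ∈ A, -a ∉ A := by
  intro S
  induction S using Finset.strongInduction with
  | _ S ih =>
    intro hneg hfix
    rcases S.eq_empty_or_nonempty with rfl | ⟨x, hx⟩
    · exact ⟨∅, by simp⟩
    · have hnx : -x ∈ S := hneg x hx
      have hne : -x ≠ x := hfix x hx
      set S' : Finset G := (S.erase x).erase (-x) with hS'
      have hsub : S' ⊂ S := by
        refine Finset.ssubset_iff_of_subset ?_ |>.mpr ⟨x, hx, by simp [hS']⟩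
        exact (Finset.erase_subset _ _).trans (Finset.erase_subset _ _)
      have hmem : ∀ y, y ∈ S' ↔ y ∈ S ∧ y ≠ x ∧ y ≠ -x := by
        intro y; simp [hS', and_comm, and_left_comm]; tauto
      obtain ⟨A', hA'sub, hA'card, hA'⟩ := ih S' hsub
        (fun y hy => by
          rw [hmem] at hy ⊢
          exact ⟨hneg y hy.1, fun h => hy.2.2 (by rw [← h]; simp), fun h => hy.2.1 (neg_injective h)⟩)
        (fun y hy => hfix y ((hmem y).mp hy).1)
      have hS'card : S'.card + 2 = S.card := by
        have h1 : (-x) ∈ S.erase x := Finset.mem_erase.mpr ⟨hne, hnx⟩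
        have := Finset.card_erase_of_mem h1
        have := Finset.card_erase_of_mem hx
        have : 0 < (S.erase x).card := Finset.card_pos.mpr ⟨-x, h1⟩
        have : 0 < S.card := Finset.card_pos.mpr ⟨x, hx⟩
        simp only [hS']
        omega
      refine ⟨insert x A', ?_, ?_, ?_⟩
      · intro y hy
        rcases Finset.mem_insert.mp hy with rfl | hy
        · exact hx
        · exact ((hmem y).mp (hA'sub hy)).1
      · have hxA' : x ∉ A' := fun h => ((hmem x).mp (hA'sub h)).2.1 rfl
        rw [Finset.card_insert_of_notMem hxA']
        omega
      · intro a ha hcontra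
        rcases Finset.mem_insert.mp ha with rfl | ha
        · rcases Finset.mem_insert.mp hcontra with h | h
          · exact hne h
          · exact ((hmem (-a)).mp (hA'sub h)).2.2 rfl
        · rcases Finset.mem_insert.mp hcontra with h | h
          · exact ((hmem a).mp (hA'sub ha)).2.2 (by rw [← h, neg_neg])
          · exact hA' a ha h

private lemma exists_hom_two {G : Type*} [AddCommGroup G] [Fintype G] [DecidableEq G]
    (h2 : 2 ∣ Fintype.card G) : ∃ f : G →+ ZMod 2, ∃ g : G, f g = 1 := by
  obtain ⟨x, hx⟩ := exists_prime_addOrderOf_dvd_card 2 h2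
  have hx0 : x ≠ 0 := by
    intro h; rw [h, addOrderOf_zero] at hx; norm_num at hx
  have hxx : 2 • x = 0 := by
    rw [← hx]; exact addOrderOf_nsmul_eq_zero x
  set d : G →+ G := 2 • (AddMonoidHom.id G) with hd
  have hdapp : ∀ z : G, d z = 2 • z := fun z => rfl
  have hdnotsurj : ¬ Function.Surjective d := by
    intro hs
    have hinj := Finite.injective_iff_surjective.mpr hs
    apply hx0
    apply hinj
    simp only [hdapp, hxx, smul_zero]
  set H : AddSubgroup G := d.range with hH
  obtain ⟨y, hy⟩ := not_forall.mp hdnotsurj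
  have hyH : y ∉ H := by
    intro ⟨w, hw⟩; exact hy ⟨w, hw⟩
  haveI : Module (ZMod 2) (G ⧸ H) :=
    QuotientAddGroup.zmodModule (fun z => ⟨z, rfl⟩)
  haveI : Nontrivial (G ⧸ H) := by
    refine ⟨QuotientAddGroup.mk' H y, 0, ?_⟩
    simpa [QuotientAddGroup.mk'_apply, QuotientAddGroup.eq_zero_iff] using hyH
  haveI : Fact (Nat.Prime 2) := ⟨by norm_num⟩
  let b := Module.Basis.ofVectorSpace (ZMod 2) (G ⧸ H)
  obtain ⟨i⟩ := b.index_nonempty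
  obtain ⟨g, hg⟩ := QuotientAddGroup.mk'_surjective H (b i)
  refine ⟨((b.coord i).toAddMonoidHom).comp (QuotientAddGroup.mk' H), g, ?_⟩
  rw [QuotientAddGroup.mk'_apply] at hg
  simp only [AddMonoidHom.coe_comp, Function.comp_apply, QuotientAddGroup.mk'_apply,
    LinearMap.toAddMonoidHom_coe, Module.Basis.coord_apply, hg, Module.Basis.repr_self]
  exact Finsupp.single_eq_same

private lemma lower {G : Type*} [AddCommGroup G] [Fintype G] [DecidableEq G]
    (hn : 2 ≤ Fintype.card G) :
    ∃ A : Finset G, A.card = Fintype.card G / 2 ∧ A + A ≠ Finset.univ := by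
  set n := Fintype.card G with hncard
  rcases Nat.even_or_odd n with he | ho
  · -- even case
    obtain ⟨f, g0, hg0⟩ := exists_hom_two he.two_dvd
    set A : Finset G := Finset.univ.filter (fun g => f g = 1) with hA
    set A0 : Finset G := Finset.univ.filter (fun g => f g = 0) with hA0
    have hval : ∀ x : ZMod 2, x = 0 ∨ x = 1 := by decide
    have himg : A = A0.image (· + g0) := by
      ext z
      simp only [hA, hA0, Finset.mem_filter, Finset.mem_image, Finset.mem_univ, true_and]
      constructor
      · intro hz
        refine ⟨z - g0, ?_, by abel⟩
        rw [map_sub, hz, hg0, sub_self]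
      · rintro ⟨w, hw, rfl⟩
        rw [map_add, hw, hg0, zero_add]
    have hcard0 : A.card = A0.card := by
      rw [himg]
      exact Finset.card_image_of_injective _ (add_left_injective g0)
    have hsplit : A.card + A0.card = n := by
      have := Finset.card_filter_add_card_filter_not
        (s := (Finset.univ : Finset G)) (p := fun g => f g = 1)
      have hcompl : Finset.univ.filter (fun g => ¬ f g = 1) = A0 := by
        ext z
        simp only [hA0, Finset.mem_filter, Finset.mem_univ, true_and]
        rcases hval (f z) with h | h <;> simp [h]
      rw [hcompl] at this
      simpa [hA, hncard] using this
    refine ⟨A, by omega, ?_⟩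
    intro hcontra
    have : g0 ∈ A + A := hcontra ▸ Finset.mem_univ g0
    obtain ⟨a, ha, b, hb, hab⟩ := Finset.mem_add.mp this
    rw [hA, Finset.mem_filter] at ha hb
    have : f g0 = 0 := by
      rw [← hab, map_add, ha.2, hb.2]
      decide
    rw [hg0] at this
    exact one_ne_zero this
  · -- odd case
    set S : Finset G := Finset.univ.erase 0 with hS
    have hScard : S.card = n - 1 := by
      rw [hS, Finset.card_erase_of_mem (Finset.mem_univ 0), Finset.card_univ]
    have hno2 : ∀ x : G, -x = x → x = 0 := by
      intro x hxx
      have h2x : 2 • x = 0 := by rw [two_nsmul]; nth_rewrite 1 [← hxx]; exact neg_add_cancel x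
      have hd2 : addOrderOf x ∣ 2 := addOrderOf_dvd_of_nsmul_eq_zero h2x
      have hdn : addOrderOf x ∣ n := addOrderOf_dvd_card
      have : addOrderOf x ∣ Nat.gcd 2 n := Nat.dvd_gcd hd2 hdn
      have hg : Nat.gcd 2 n = 1 := Nat.Coprime.gcd_eq_one (Nat.coprime_two_left.mpr ho)
      rw [hg, Nat.dvd_one] at this
      exact AddMonoid.addOrderOf_eq_one_iff.mp this
    obtain ⟨A, hAsub, hAcard, hA⟩ := pick_half S
      (fun x hx => by
        rw [hS, Finset.mem_erase] at hx ⊢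
        exact ⟨fun h => hx.1 (neg_eq_zero.mp h), Finset.mem_univ _⟩)
      (fun x hx hc => (Finset.mem_erase.mp hx).1 (hno2 x hc))
    rw [hScard] at hAcard
    refine ⟨A, by omega, ?_⟩
    intro hcontra
    have : (0 : G) ∈ A + A := hcontra ▸ Finset.mem_univ 0
    obtain ⟨a, ha, b, hb, hab⟩ := Finset.mem_add.mp this
    have : b = -a := by rw [eq_neg_iff_add_eq_zero, add_comm]; exact hab
    exact hA a ha (this ▸ hb)

theorem stmt_1 {G : Type*} [AddCommGroup G] [Fintype G] [DecidableEq G]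
    (hn : 2 ≤ Fintype.card G) :
    IsLeast {m : ℕ | 0 < m ∧ ∀ A : Finset G, m ≤ A.card → A + A = Finset.univ}
      (Fintype.card G / 2 + 1) := by
  constructor
  · refine ⟨by omega, fun A hA => upper A ?_⟩
    have := Fintype.card G
    omega
  · intro m ⟨hm0, hm⟩
    by_contra h'
    push_neg at h'
    obtain ⟨A, hAcard, hAne⟩ := lower hn
    exact hAne (hm A (by omega))
end

section
/- Let G be a finite abelian group of even order n whose exponent is not divisible by 4, and let A ⊆ G with |A| = n/2. Then G has a subgroup H of index 2 such that |A ∩ H| ≠ |A ∩ (G \ H)|. -/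
/-! Let `K = 2G`; as `4 ∤ exp G`, `K` has no element of order `2`, so `|K|` is odd. The group
`G/K` is elementary abelian of exponent `2`, so its complex characters take values `±1`, and a
nontrivial one pulls back to `G` with a kernel of index `2`. If `A` were balanced on every subgroup
of index `2`, the character sums `∑_{a ∈ A} ψ a` would vanish for all `ψ ≠ 0`; summing over all
characters and using orthogonality gives `|A| = [G : K] · |A ∩ K|`. Together with
`2|A| = |G| = [G : K] · |K|` this makes `|K| = 2|A ∩ K|` even, a contradiction. -/

open Finset

namespace AddChar

variable {G : Type*} [AddCommGroup G]

def ker {M : Type*} [Monoid M] (ψ : AddChar G M) : AddSubgroup G :=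
  ψ.toAddMonoidHom.ker

@[simp]
lemma mem_ker {M : Type*} [Monoid M] {ψ : AddChar G M} {a : G} : a ∈ ψ.ker ↔ ψ a = 1 :=
  Iff.rfl

lemma apply_eq_one_or_neg_one_of_two_nsmul_eq_zero (ψ : AddChar G ℂ) {a : G}
    (ha : 2 • a = 0) : ψ a = 1 ∨ ψ a = -1 := by
  have : ψ a ^ 2 = 1 := by rw [← map_nsmul_eq_pow, ha, map_zero_eq_one]
  exact sq_eq_one_iff.mp this

variable {ψ : AddChar G ℂ}

lemma index_ker_eq_two (hψ : ∀ a, ψ a = 1 ∨ ψ a = -1) (hψ₀ : ψ ≠ 0) : ψ.ker.index = 2 := by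
  obtain ⟨c, hc⟩ := ne_zero_iff.mp hψ₀
  have hc' : ψ c = -1 := (hψ c).resolve_left hc
  refine AddSubgroup.index_eq_two_iff.mpr ⟨c, fun b => ?_⟩
  rcases hψ b with hb | hb <;> norm_num [map_add_eq_mul, hb, hc']

lemma sum_apply_eq_card_filter_mem_ker_sub (hψ : ∀ a, ψ a = 1 ∨ ψ a = -1)
    [DecidablePred (· ∈ ψ.ker)] (A : Finset G) :
    ∑ a ∈ A, ψ a = #(A.filter (· ∈ ψ.ker)) - #(A.filter (· ∉ ψ.ker)) := by
  have : ∀ a, ψ a = if a ∈ ψ.ker then 1 else -1 := fun a => by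
    rcases hψ a with h | h <;> simp [h]
  simp_rw [this, sum_ite, sum_const, nsmul_eq_mul]
  ring

end AddChar

section

variable {G : Type*} [AddCommGroup G]

open Classical in
lemma card_eq_index_mul_card_filter_mem_of_forall_index_eq_two [Finite G] {K : AddSubgroup G}
    [DecidablePred (· ∈ K)] (hK : ∀ x : G, 2 • x ∈ K) (A : Finset G)
    (hbal : ∀ H : AddSubgroup G, H.index = 2 → #(A.filter (· ∈ H)) = #(A.filter (· ∉ H))) :
    #A = K.index * #(A.filter (· ∈ K)) := by
  have : Fintype (G ⧸ K) := Fintype.ofFinite _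
  have htwo : ∀ v : G ⧸ K, 2 • v = 0 := by
    rintro ⟨x⟩
    exact (QuotientAddGroup.eq_zero_iff _).mpr (hK x)
  have horth : ∀ ψ : AddChar (G ⧸ K) ℂ,
      ∑ a ∈ A, ψ (QuotientAddGroup.mk a) = if ψ = 0 then (#A : ℂ) else 0 := by
    intro ψ
    split_ifs with hψ
    · simp [hψ]
    set ψ' := ψ.compAddMonoidHom (QuotientAddGroup.mk' K)
    have hψ' : ∀ a, ψ' a = 1 ∨ ψ' a = -1 := fun a =>
      AddChar.apply_eq_one_or_neg_one_of_two_nsmul_eq_zero ψ (htwo _)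
    have hψ'₀ : ψ' ≠ 0 := by
      obtain ⟨⟨a⟩, ha⟩ := AddChar.ne_zero_iff.mp hψ
      exact AddChar.ne_zero_iff.mpr ⟨a, ha⟩
    change ∑ a ∈ A, ψ' a = 0
    rw [AddChar.sum_apply_eq_card_filter_mem_ker_sub hψ',
      hbal _ (AddChar.index_ker_eq_two hψ' hψ'₀), sub_self]
  have hsum : ∑ ψ : AddChar (G ⧸ K) ℂ, ∑ a ∈ A, ψ (QuotientAddGroup.mk a)
      = Fintype.card (G ⧸ K) * #(A.filter (· ∈ K)) := by
    rw [sum_comm]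
    simp_rw [AddChar.sum_apply_eq_ite, QuotientAddGroup.eq_zero_iff, sum_ite, sum_const_zero,
      add_zero, sum_const, nsmul_eq_mul, mul_comm]
  rw [Fintype.sum_congr _ _ horth, Finset.sum_ite_eq', if_pos (mem_univ _)] at hsum
  rw [AddSubgroup.index, Nat.card_eq_fintype_card]
  exact_mod_cast hsum

lemma odd_card_range_two_nsmul [Finite G] (hexp : ¬ 4 ∣ AddMonoid.exponent G) :
    Odd (Nat.card (nsmulAddMonoidHom (α := G) 2).range) := by
  by_contra heven
  obtain ⟨⟨_, x, rfl⟩, hx⟩ := exists_prime_addOrderOf_dvd_card' 2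
    (Nat.not_odd_iff_even.mp heven).two_dvd
  rw [← AddSubgroup.addOrderOf_coe] at hx
  change addOrderOf (2 • x) = 2 at hx
  have hne : ¬ 2 ^ 1 • x = 0 := by
    rw [pow_one, ← AddMonoid.addOrderOf_eq_one_iff, hx]
    decide
  have heq : 2 ^ (1 + 1) • x = 0 := by
    rw [pow_succ, pow_one, mul_nsmul]
    nth_rw 1 [← hx]
    exact addOrderOf_nsmul_eq_zero _
  have h4 : addOrderOf x = 4 := addOrderOf_eq_prime_pow hne heq
  exact hexp (h4 ▸ AddMonoid.addOrder_dvd_exponent x)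

end

open Finset Pointwise Classical in
theorem stmt_2_general {G : Type*} [AddCommGroup G] [Fintype G]
    (hexp : ¬ (4 ∣ AddMonoid.exponent G))
    (A : Finset G) (hA : 2 * A.card = Fintype.card G) :
    ∃ H : AddSubgroup G, H.index = 2 ∧
      (A.filter (fun a => a ∈ H)).card ≠ (A.filter (fun a => a ∉ H)).card := by
  by_contra! hbal
  set K := (nsmulAddMonoidHom (α := G) 2).range
  have hcard : K.index * Nat.card K = K.index * (2 * #(A.filter (· ∈ K))) := by
    rw [AddSubgroup.index_mul_card, Nat.card_eq_fintype_card, ← hA,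
      card_eq_index_mul_card_filter_mem_of_forall_index_eq_two (K := K) (fun x => ⟨x, rfl⟩) A hbal,
      mul_left_comm]
  have hK : Nat.card K = 2 * #(A.filter (· ∈ K)) :=
    Nat.eq_of_mul_eq_mul_left (Nat.pos_of_ne_zero K.index_ne_zero_of_finite) hcard
  exact Nat.not_even_iff_odd.mpr (odd_card_range_two_nsmul hexp) (hK ▸ even_two_mul _)

open Finset Pointwise Classical in
theorem stmt_2 {G : Type*} [AddCommGroup G] [Fintype G] [DecidableEq G]
    (hn : Even (Fintype.card G)) (hexp : ¬ (4 ∣ AddMonoid.exponent G))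
    (A : Finset G) (hA : 2 * A.card = Fintype.card G) :
    ∃ H : AddSubgroup G, H.index = 2 ∧
      (A.filter (fun a => a ∈ H)).card ≠ (A.filter (fun a => a ∉ H)).card :=
  stmt_2_general hexp A hA
end

section
/- Let G be a finite abelian group of odd order n ≥ 3. If A ⊆ G has |A| = (n−1)/2 and A + A ≠ G, then |A + A| ≥ n − 2. -/
open Finset Pointwise

private lemma halfmem {G : Type*} [AddCommGroup G] [Fintype G]
    (hodd : Odd (Fintype.card G)) (H : AddSubgroup G) {y : G} (hy : y + y ∈ H) : y ∈ H := by
  have hd : addOrderOf y ∣ Fintype.card G := addOrderOf_dvd_card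
  have hdo : Odd (addOrderOf y) := by
    rcases Nat.even_or_odd (addOrderOf y) with he | ho
    · exfalso
      have h2 : 2 ∣ Fintype.card G := dvd_trans (even_iff_two_dvd.mp he) hd
      rcases hodd with ⟨k, hk⟩
      rcases h2 with ⟨j, hj⟩
      omega
    · exact ho
  obtain ⟨t, ht⟩ := hdo
  have hy2 : y = (t + 1) • (y + y) := by
    have h1 : (t + 1) • (y + y) = (2 * t + 2) • y := by
      rw [smul_add, ← add_nsmul]; congr 1; ring
    have h2 : (2 * t + 2) • y = addOrderOf y • y + 1 • y := by
      rw [← add_nsmul]; congr 1; omega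
    rw [h1, h2, addOrderOf_nsmul_eq_zero, zero_add, one_nsmul]
  rw [hy2]
  exact AddSubgroup.nsmul_mem H hy _

theorem stmt_7 {G : Type*} [AddCommGroup G] [Fintype G] [DecidableEq G]
    (hodd : Odd (Fintype.card G)) (hn : 3 ≤ Fintype.card G)
    (A : Finset G) (hA : A.card = (Fintype.card G - 1) / 2)
    (hinc : A + A ≠ Finset.univ) :
    Fintype.card G - 2 ≤ (A + A).card := by
  by_contra hlt
  push_neg at hlt
  set n := Fintype.card G with hn_def
  obtain ⟨t0, ht0⟩ := hodd
  have hodd2 : Odd (Fintype.card G) := ⟨t0, by omega⟩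
  have hcard : 2 * A.card + 1 = n := by
    have : (n - 1) / 2 = t0 := by omega
    omega
  -- extract three distinct elements outside A + A
  have hAAn : (A + A).card ≤ n := by
    rw [hn_def, ← Finset.card_univ]; exact Finset.card_le_univ _
  set S := Finset.univ \ (A + A) with hS_def
  have hScard : 3 ≤ S.card := by
    rw [hS_def, Finset.card_sdiff_of_subset (Finset.subset_univ _), Finset.card_univ]
    omega
  obtain ⟨g1, hg1S⟩ : S.Nonempty := Finset.card_pos.mp (by omega)
  have h2 : (S.erase g1).Nonempty := Finset.card_pos.mp (by
    rw [Finset.card_erase_of_mem hg1S]; omega)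
  obtain ⟨g2, hg2S'⟩ := h2
  have h3 : ((S.erase g1).erase g2).Nonempty := Finset.card_pos.mp (by
    rw [Finset.card_erase_of_mem hg2S', Finset.card_erase_of_mem hg1S]; omega)
  obtain ⟨g3, hg3S'⟩ := h3
  have hne21 : g2 ≠ g1 := (Finset.mem_erase.mp hg2S').1
  have hg2S : g2 ∈ S := (Finset.mem_erase.mp hg2S').2
  have hne32 : g3 ≠ g2 := (Finset.mem_erase.mp hg3S').1
  have hne31 : g3 ≠ g1 := (Finset.mem_erase.mp (Finset.mem_erase.mp hg3S').2).1
  have hg3S : g3 ∈ S := (Finset.mem_erase.mp (Finset.mem_erase.mp hg3S').2).2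
  have hg1' : g1 ∉ A + A := (Finset.mem_sdiff.mp hg1S).2
  have hg2' : g2 ∉ A + A := (Finset.mem_sdiff.mp hg2S).2
  have hg3' : g3 ∉ A + A := (Finset.mem_sdiff.mp hg3S).2
  -- halving
  have hksq : ∀ g : G, (t0 + 1) • g + (t0 + 1) • g = g := by
    intro g
    rw [← add_nsmul]
    have h1 : (t0 + 1) + (t0 + 1) = n + 1 := by omega
    rw [h1, add_nsmul, one_nsmul, hn_def, card_nsmul_eq_zero, zero_add]
  set c1 := (t0 + 1) • g1 with hc1_def
  set c2 := (t0 + 1) • g2 with hc2_def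
  set c3 := (t0 + 1) • g3 with hc3_def
  have hc1 : c1 + c1 = g1 := hksq g1
  have hc2 : c2 + c2 = g2 := hksq g2
  have hc3sq : c3 + c3 = g3 := hksq g3
  clear_value c1 c2 c3
  -- basic facts
  have key : ∀ g : G, g ∉ A + A → ∀ x, x ∈ A → g - x ∉ A := by
    intro g hg x hx hx'
    exact hg (by have := Finset.add_mem_add hx' hx; rwa [sub_add_cancel] at this)
  have cnot : ∀ g c : G, g ∉ A + A → c + c = g → c ∉ A := by
    intro g c hg hc hcA
    have h1 : g - c = c := by rw [← hc]; abel
    have h2 := key g hg c hcA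
    rw [h1] at h2
    exact h2 hcA
  have cover : ∀ g c : G, g ∉ A + A → c + c = g → ∀ x, x ≠ c → x ∉ A → g - x ∈ A := by
    intro g c hg hc
    set A' := A.image (fun a => g - a) with hA'_def
    have hcardA' : A'.card = A.card :=
      Finset.card_image_of_injective _ sub_right_injective
    have hdisj : Disjoint A A' := by
      rw [Finset.disjoint_left]
      intro a ha ha'
      obtain ⟨b, hb, hba⟩ := Finset.mem_image.mp ha'
      exact key g hg b hb (hba ▸ ha)
    have hcnotA : c ∉ A := cnot g c hg hc
    have hcA' : c ∉ A' := by
      intro h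
      obtain ⟨b, hb, hbc⟩ := Finset.mem_image.mp h
      have hgc : g - c = c := by rw [← hc]; abel
      have : b = c := by
        have : g - (g - b) = g - c := by rw [hbc]
        rwa [sub_sub_cancel, hgc] at this
      exact hcnotA (by rwa [this] at hb)
    have huniv : insert c (A ∪ A') = Finset.univ := by
      apply Finset.eq_univ_of_card
      rw [Finset.card_insert_of_notMem (by
        rw [Finset.mem_union]; push_neg; exact ⟨hcnotA, hcA'⟩)]
      rw [Finset.card_union_of_disjoint hdisj, hcardA']
      omega
    intro x hxc hxA
    have hx : x ∈ insert c (A ∪ A') := huniv ▸ Finset.mem_univ x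
    rcases Finset.mem_insert.mp hx with h | h
    · exact absurd h hxc
    rcases Finset.mem_union.mp h with h | h
    · exact absurd h hxA
    obtain ⟨b, hb, hbx⟩ := Finset.mem_image.mp h
    have : g - x = b := by rw [← hbx, sub_sub_cancel]
    rwa [this]
  -- the translation
  set u := c1 - c2 with hu_def
  clear_value u
  have hu : u ≠ 0 := by
    intro h
    apply hne21
    have hcc : c1 = c2 := by rwa [hu_def, sub_eq_zero] at h
    rw [← hc2, ← hc1, hcc]
  set m := addOrderOf u with hm_def
  have hmodd : Odd m := by
    have hd : m ∣ n := addOrderOf_dvd_card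
    rcases Nat.even_or_odd m with he | ho
    · exfalso
      have h2 : 2 ∣ n := dvd_trans (even_iff_two_dvd.mp he) hd
      rcases h2 with ⟨j, hj⟩
      omega
    · exact ho
  obtain ⟨s0, hs0⟩ := hmodd
  have hm1 : m ≠ 1 := by
    intro h
    exact hu (AddMonoid.addOrderOf_eq_one_iff.mp h)
  have hm3 : 3 ≤ m := by
    rcases Nat.eq_zero_or_pos s0 with h | h
    · omega
    · omega
  have hc1u : c1 - u = c2 := by rw [hu_def]; abel
  have hR12 : ∀ x : G, x ≠ c1 - u → x ≠ c1 - u - u → (x ∈ A ↔ x + u + u ∈ A) := by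
    intro x hx1 hx2
    constructor
    · intro hxA
      have h1 : g2 - x ∉ A := key g2 hg2' x hxA
      have h2 : g2 - x ≠ c1 := by
        intro h
        apply hx2
        have hx' : x = g2 - c1 := by
          have := sub_sub_cancel g2 x
          rw [h] at this; rw [← this]
        rw [hx', ← hc2, ← hc1u]; abel
      have h3 : g1 - (g2 - x) ∈ A := cover g1 c1 hg1' hc1 _ h2 h1
      have h4 : g1 - (g2 - x) = x + u + u := by
        rw [← hc1, ← hc2, hu_def]; abel
      rwa [h4] at h3
    · intro hxA
      have h1 : g1 - (x + u + u) ∉ A := key g1 hg1' _ hxA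
      have h2 : g1 - (x + u + u) = g2 - x := by
        rw [← hc1, ← hc2, hu_def]; abel
      by_contra hxA'
      have h3 : g2 - x ∈ A := cover g2 c2 hg2' hc2 x (by rw [← hc1u]; exact hx1) hxA'
      rw [← h2] at h3
      exact h1 h3
  -- odd positions are in A
  have hLO : ∀ q : ℕ, 2 * q + 1 < m → c1 + (2 * q + 1) • u ∈ A := by
    intro q
    induction q with
    | zero =>
      intro _
      have h0 : c2 ∉ A := cnot g2 c2 hg2' hc2
      have hne : c2 ≠ c1 := by
        intro h
        apply hu
        rw [hu_def, h, sub_self]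
      have h1 : g1 - c2 ∈ A := cover g1 c1 hg1' hc1 c2 hne h0
      have h2 : g1 - c2 = c1 + (2 * 0 + 1) • u := by
        rw [← hc1, hu_def]
        simp only [Nat.mul_zero, Nat.zero_add, one_nsmul]
        abel
      rwa [h2] at h1
    | succ q ih =>
      intro hlt
      have ih' := ih (by omega)
      have hx1 : c1 + (2 * q + 1) • u ≠ c1 - u := by
        intro h
        have h' : (2 * q + 1) • u = -u := by
          have := h
          rwa [sub_eq_add_neg, add_right_inj] at this
        have h'' : (2 * q + 1 + 1) • u = 0 := by
          rw [succ_nsmul, h', neg_add_cancel]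
        have hdvd : m ∣ 2 * q + 2 := by
          rw [hm_def]
          exact addOrderOf_dvd_of_nsmul_eq_zero (by rwa [show 2*q+1+1 = 2*q+2 from rfl] at h'')
        have := Nat.le_of_dvd (by omega) hdvd
        omega
      have hx2 : c1 + (2 * q + 1) • u ≠ c1 - u - u := by
        intro h
        have h' : (2 * q + 1) • u = -u + -u := by
          have := h
          rw [sub_eq_add_neg, sub_eq_add_neg, add_assoc] at this
          rwa [add_right_inj] at this
        have h'' : (2 * q + 3) • u = 0 := by
          rw [show 2*q+3 = (2*q+1) + 1 + 1 from by ring, succ_nsmul, succ_nsmul, h']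
          abel
        have hdvd : m ∣ 2 * q + 3 := by
          rw [hm_def]
          exact addOrderOf_dvd_of_nsmul_eq_zero h''
        have := Nat.le_of_dvd (by omega) hdvd
        omega
      have hstep := (hR12 _ hx1 hx2).mp ih'
      have heq : c1 + (2 * (q + 1) + 1) • u = c1 + (2 * q + 1) • u + u + u := by
        conv_lhs => rw [show 2 * (q + 1) + 1 = (2 * q + 1) + 1 + 1 from by ring,
          succ_nsmul, succ_nsmul]
        rw [← add_assoc, ← add_assoc]
      rwa [← heq] at hstep
  set H := AddSubgroup.zmultiples u with hH_def
  have huH : u ∈ H := AddSubgroup.mem_zmultiples u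
  -- periodicity off the coset of c1
  have hper : ∀ x : G, x - c1 ∉ H → (x ∈ A ↔ x + u ∈ A) := by
    have aux : ∀ q : ℕ, ∀ x : G, x - c1 ∉ H → (x ∈ A ↔ x + (2 * q) • u ∈ A) := by
      intro q
      induction q with
      | zero => intro x _; simp
      | succ q ih =>
        intro x hx
        have hyH : (x + (2 * q) • u) - c1 ∉ H := by
          intro h
          apply hx
          have heq : x - c1 = (x + (2 * q) • u - c1) - (2 * q) • u := by abel
          rw [heq]
          exact AddSubgroup.sub_mem H h (AddSubgroup.nsmul_mem H huH _)
        have h1 : x + (2 * q) • u ≠ c1 - u := by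
          intro h
          apply hyH
          rw [h]
          have : c1 - u - c1 = -u := by abel
          rw [this]
          exact AddSubgroup.neg_mem H huH
        have h2 : x + (2 * q) • u ≠ c1 - u - u := by
          intro h
          apply hyH
          rw [h]
          have : c1 - u - u - c1 = -(u + u) := by abel
          rw [this]
          exact AddSubgroup.neg_mem H (AddSubgroup.add_mem H huH huH)
        have hstep := hR12 _ h1 h2
        have heq : x + (2 * (q + 1)) • u = x + (2 * q) • u + u + u := by
          conv_lhs => rw [show 2 * (q + 1) = 2 * q + 1 + 1 from by ring,
            succ_nsmul, succ_nsmul]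
          rw [← add_assoc, ← add_assoc]
        rw [← heq] at hstep
        exact (ih x hx).trans hstep
    intro x hx
    have h2s : (2 * (s0 + 1)) • u = u := by
      have h1 : 2 * (s0 + 1) = m + 1 := by omega
      rw [h1, succ_nsmul, hm_def, addOrderOf_nsmul_eq_zero, zero_add]
    have := aux (s0 + 1) x hx
    rwa [h2s] at this
  have hc3A : c3 ∉ A := cnot g3 c3 hg3' hc3sq
  by_cases hc3H : c3 - c1 ∈ H
  · -- Case 2 : c3 in the coset of c1
    obtain ⟨z, hz⟩ := AddSubgroup.mem_zmultiples_iff.mp hc3H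
    have hmpos : 0 < m := by omega
    set e := (z % (m : ℤ)).toNat with he_def
    have hzmod : ((z % (m : ℤ))) = (e : ℤ) := by
      rw [he_def, Int.toNat_of_nonneg (Int.emod_nonneg z (by exact_mod_cast hmpos.ne'))]
    have he_lt : e < m := by
      have := Int.emod_lt_of_pos z (by exact_mod_cast hmpos : (0:ℤ) < (m:ℤ))
      omega
    have he : c3 = c1 + e • u := by
      have hmu : (m : ℤ) • u = 0 := by
        rw [natCast_zsmul, hm_def, addOrderOf_nsmul_eq_zero]
      have hzu : z • u = (e : ℤ) • u := by
        conv_lhs => rw [show z = (m : ℤ) * (z / m) + z % m from (Int.mul_ediv_add_emod z m).symm]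
        rw [add_zsmul, mul_comm, mul_zsmul, hmu, smul_zero, zero_add, hzmod]
      have : c3 - c1 = e • u := by rw [← hz, hzu, natCast_zsmul]
      rw [← this]; abel
    have he_even : e % 2 = 0 := by
      by_contra hoe
      have h1 : c1 + (2 * (e / 2) + 1) • u ∈ A := hLO (e / 2) (by omega)
      rw [show 2 * (e / 2) + 1 = e from by omega] at h1
      exact hc3A (he ▸ h1)
    have he0 : e ≠ 0 := by
      intro h
      apply hne31
      rw [← hc3sq, ← hc1, he, h]
      simp
    have heM : e ≠ m - 1 := by
      intro h
      apply hne32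
      have hmu : (m - 1) • u = -u := by
        have h0 : (m - 1) • u + u = 0 := by
          rw [← succ_nsmul, show m - 1 + 1 = m from by omega, hm_def,
            addOrderOf_nsmul_eq_zero]
        rw [← neg_eq_of_add_eq_zero_left h0]
      have hc3c2 : c3 = c2 := by
        rw [he, h, hmu, ← hc1u]; abel
      rw [← hc3sq, ← hc2, hc3c2]
    have h1 : c1 + (e - 1) • u ∈ A := by
      have := hLO (e / 2 - 1) (by omega)
      rwa [show 2 * (e / 2 - 1) + 1 = e - 1 from by omega] at this
    have h2 : g3 - (c1 + (e - 1) • u) ∉ A := key g3 hg3' _ h1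
    have h3 : g3 - (c1 + (e - 1) • u) = c1 + (e + 1) • u := by
      rw [← hc3sq, he, sub_eq_iff_eq_add]
      have hsm : (e + 1) • u + (e - 1) • u = e • u + e • u := by
        rw [← add_nsmul, ← add_nsmul]; congr 1; omega
      calc c1 + e • u + (c1 + e • u) = c1 + c1 + (e • u + e • u) := by abel
        _ = c1 + c1 + ((e + 1) • u + (e - 1) • u) := by rw [hsm]
        _ = c1 + (e + 1) • u + (c1 + (e - 1) • u) := by abel
    have h4 : c1 + (e + 1) • u ∈ A := by
      have := hLO (e / 2) (by omega)
      rwa [show 2 * (e / 2) + 1 = e + 1 from by omega] at this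
    exact h2 (h3 ▸ h4)
  · -- Case 1 : c3 not in the coset of c1
    have hc1A : c1 ∉ A := cnot g1 c1 hg1' hc1
    have hne : c1 ≠ c3 := by
      intro h
      apply hc3H
      rw [← h, sub_self]
      exact AddSubgroup.zero_mem H
    have hB1 : g3 - c1 ∈ A := cover g3 c3 hg3' hc3sq c1 hne hc1A
    have hc1uA : c1 + u ∈ A := by
      have := hLO 0 (by omega)
      rwa [show (2 * 0 + 1 : ℕ) = 1 from rfl, one_nsmul] at this
    have hne2 : c1 + u ≠ c3 := by
      intro h
      apply hc3H
      rw [← h]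
      have : c1 + u - c1 = u := by abel
      rw [this]; exact huH
    have hB2 : g3 - (c1 + u) ∉ A := key g3 hg3' _ hc1uA
    have hxH : (g3 - c1 - u) - c1 ∉ H := by
      intro h
      apply hc3H
      apply halfmem hodd2 H
      have heq : (c3 - c1) + (c3 - c1) = ((g3 - c1 - u) - c1) + u := by
        rw [← hc3sq]; abel
      rw [heq]
      exact AddSubgroup.add_mem H h huH
    have hiff := hper _ hxH
    rw [sub_add_cancel] at hiff
    have hmem : g3 - c1 - u ∈ A := hiff.mpr hB1
    have hfin : g3 - (c1 + u) = g3 - c1 - u := by abel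
    exact hB2 (hfin ▸ hmem)
end

section
/- Let n be odd with n ∉ {3, 5, 9}, and let G = Z_n be the cyclic group of order n. Then there exists a subset A of G with |A| = (n−1)/2 and |A + A| = n − 1. -/
open Finset Pointwise

theorem stmt_9 (n : ℕ) (hodd : Odd n) (h3 : n ≠ 3) (h5 : n ≠ 5) (h9 : n ≠ 9) :
    ∃ A : Finset (ZMod n), A.card = (n - 1) / 2 ∧ (A + A).card = n - 1 := by
  rcases eq_or_ne n 1 with rfl | h1
  · exact ⟨∅, by simp, by simp⟩
  -- n is odd, not 1, 3, 5, so n ≥ 7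
  have hn7 : 7 ≤ n := by
    rcases hodd with ⟨m, rfl⟩; omega
  haveI : NeZero n := ⟨by omega⟩
  set k : ℕ := (n - 1) / 2 with hk
  have hk3 : 3 ≤ k := by
    rcases hodd with ⟨m, hm⟩; omega
  have hnk : n = 2 * k + 1 := by
    rcases hodd with ⟨m, hm⟩; omega
  set S : Finset ℕ := insert k (Finset.range (k - 1)) with hS
  have hSbound : ∀ a ∈ S, a < n := by
    intro a ha
    simp only [hS, Finset.mem_insert, Finset.mem_range] at ha
    omega
  have hinj : ∀ a < n, ∀ b < n, (a : ZMod n) = (b : ZMod n) → a = b := by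
    intro a ha b hb h
    have := congrArg ZMod.val h
    rwa [ZMod.val_natCast_of_lt ha, ZMod.val_natCast_of_lt hb] at this
  refine ⟨S.image (Nat.castRingHom (ZMod n)), ?_, ?_⟩
  · simp only [Nat.coe_castRingHom]
    rw [Finset.card_image_of_injOn (fun a ha b hb h => hinj a (hSbound a ha) b (hSbound b hb) h)]
    simp only [hS]
    rw [Finset.card_insert_of_notMem (by simp), Finset.card_range]
    omega
  · rw [← Finset.image_add]
    have hsum : S + S = insert (2 * k) (Finset.range (2 * k - 1)) := by
      ext x
      simp only [hS, Finset.mem_add, Finset.mem_insert, Finset.mem_range]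
      constructor
      · rintro ⟨y, hy, z, hz, rfl⟩
        omega
      · rintro (rfl | hx)
        · exact ⟨k, Or.inl rfl, k, Or.inl rfl, by omega⟩
        · by_cases hxk : x < k - 1
          · exact ⟨x, Or.inr hxk, 0, Or.inr (by omega), by omega⟩
          · by_cases hxk2 : k ≤ x
            · exact ⟨k, Or.inl rfl, x - k, Or.inr (by omega), by omega⟩
            · exact ⟨1, Or.inr (by omega), x - 1, Or.inr (by omega), by omega⟩
    rw [hsum]
    have hbound2 : ∀ a ∈ insert (2 * k) (Finset.range (2 * k - 1)), a < n := by
      intro a ha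
      simp only [Finset.mem_insert, Finset.mem_range] at ha
      omega
    simp only [Nat.coe_castRingHom]
    rw [Finset.card_image_of_injOn
      (fun a ha b hb h => hinj a (hbound2 a ha) b (hbound2 b hb) h)]
    rw [Finset.card_insert_of_notMem (by simp), Finset.card_range]
    omega
end

section
/- Let G be a finite abelian group of even order n. If A ⊆ G has |A| = n/2 and A + A ≠ G, then |A + A| = n − n/d for some even divisor d of n; in particular, the stabilizer of A + A has even index d and A + A consists of d − 1 of its cosets. -/
open Finset Pointwise

section Aux

variable {G : Type*} [AddCommGroup G] [Fintype G] [DecidableEq G]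

lemma aux_singleton_add (g : G) (s : Finset G) : {g} + s = s.image (g + ·) := by
  ext x
  simp only [Finset.mem_add, Finset.mem_image, Finset.mem_singleton]
  constructor
  · rintro ⟨y, rfl, z, hz, rfl⟩; exact ⟨z, hz, rfl⟩
  · rintro ⟨z, hz, rfl⟩; exact ⟨g, rfl, z, hz, rfl⟩

/-- The stabilizer of a finset, as an additive subgroup. -/
def auxStab (s : Finset G) : AddSubgroup G where
  carrier := {g | {g} + s = s}
  zero_mem' := by
    rw [Set.mem_setOf_eq, aux_singleton_add]
    simp
  add_mem' := by
    intro a b ha hb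
    simp only [Set.mem_setOf_eq] at *
    have : ({a + b} : Finset G) = {a} + {b} := by simp
    rw [this, add_assoc, hb, ha]
  neg_mem' := by
    intro a ha
    simp only [Set.mem_setOf_eq] at *
    conv_lhs => rw [← ha, ← add_assoc]
    have : ({-a} : Finset G) + {a} = ({0} : Finset G) := by simp
    rw [this, aux_singleton_add]
    simp

lemma auxStab_mem (s : Finset G) (g : G) : g ∈ auxStab s ↔ {g} + s = s := Iff.rfl

lemma aux_compl_stab {s : Finset G} {g : G} (h : {g} + s = s) : {g} + sᶜ = sᶜ := by
  have hneg : {-g} + s = s := (auxStab s).neg_mem h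
  have hsub : {g} + sᶜ ⊆ sᶜ := by
    intro x hx
    rw [aux_singleton_add] at hx
    obtain ⟨y, hy, rfl⟩ := Finset.mem_image.1 hx
    simp only [Finset.mem_compl] at hy ⊢
    intro hgy
    apply hy
    have : -g + (g + y) ∈ {-g} + s := by
      rw [aux_singleton_add]
      exact Finset.mem_image_of_mem _ hgy
    rw [hneg] at this
    simpa using this
  have hcard : sᶜ.card ≤ ({g} + sᶜ).card := by
    rw [aux_singleton_add, Finset.card_image_of_injective _ (add_right_injective g)]
  exact (Finset.eq_of_subset_of_card_le hsub hcard).symm ▸ rfl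

lemma aux_card_stab_dvd (K : AddSubgroup G) (A : Finset G)
    (hinv : ∀ k ∈ K, ∀ a ∈ A, k + a ∈ A) : Nat.card K ∣ A.card := by
  classical
  set f : G → G ⧸ K := QuotientAddGroup.mk with hf
  rw [Finset.card_eq_sum_card_fiberwise (f := f) (t := A.image f)
    (fun x hx => Finset.mem_image_of_mem f hx)]
  have hfib : ∀ q ∈ A.image f, (A.filter (fun a => f a = q)).card = Nat.card K := by
    intro q hq
    obtain ⟨a₀, ha₀, rfl⟩ := Finset.mem_image.1 hq
    rw [Nat.card_eq_fintype_card, ← Finset.card_univ]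
    have hmem : ∀ a, a ∈ A.filter (fun a => f a = f a₀) → a - a₀ ∈ K := by
      intro a ha
      have : -a + a₀ ∈ K := (QuotientAddGroup.eq).1 (Finset.mem_filter.1 ha).2
      have h2 := K.neg_mem this
      simpa [neg_add_rev, sub_eq_add_neg, add_comm] using h2
    refine Finset.card_bij' (i := fun a ha => (⟨a - a₀, hmem a ha⟩ : K))
      (j := fun (k : K) _ => (k : G) + a₀) (fun a ha => Finset.mem_univ _) ?_ ?_ ?_
    · intro k _
      refine Finset.mem_filter.2 ⟨hinv k k.2 a₀ ha₀, ?_⟩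
      exact (QuotientAddGroup.eq).2 (by simpa using K.neg_mem k.2)
    · intro a ha; simp
    · intro k hk; simp
  rw [Finset.sum_congr rfl hfib, Finset.sum_const, smul_eq_mul]
  exact Dvd.intro _ (mul_comm _ _)

lemma aux_image_compl (A : Finset G) (hA : 2 * A.card = Fintype.card G) {c : G}
    (hc : c ∉ A + A) : A.image (fun a => c - a) = Aᶜ := by
  have hsub : A.image (fun a => c - a) ⊆ Aᶜ := by
    intro x hx
    obtain ⟨a, ha, rfl⟩ := Finset.mem_image.1 hx
    rw [Finset.mem_compl]
    intro h
    exact hc (by simpa using Finset.add_mem_add h ha)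
  have hcard : Aᶜ.card ≤ (A.image (fun a => c - a)).card := by
    rw [Finset.card_image_of_injective _ (fun a b h => sub_right_inj.mp h),
      Finset.card_compl]
    omega
  exact Finset.eq_of_subset_of_card_le hsub hcard

lemma aux_two (A : Finset G) (hA : 2 * A.card = Fintype.card G) {c c' : G}
    (hc : c ∉ A + A) (hc' : c' ∉ A + A) : {c' - c} + A = A := by
  have himg : A.image (fun a => c - a) = A.image (fun a => c' - a) :=
    (aux_image_compl A hA hc).trans (aux_image_compl A hA hc').symm
  rw [aux_singleton_add]
  have h1 : A.image ((c' - c) + ·) = (A.image (fun a => c - a)).image (fun a => c' - a) := by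
    rw [Finset.image_image]
    exact Finset.image_congr (fun a _ => by simp only [Function.comp_apply]; abel)
  rw [h1, himg, Finset.image_image]
  have h2 : ((fun a => c' - a) ∘ (fun a => c' - a)) = id := funext fun a => by simp
  rw [h2, Finset.image_id]

end Aux

theorem stmt_10 {G : Type*} [AddCommGroup G] [Fintype G] [DecidableEq G]
    (hn : Even (Fintype.card G))
    (A : Finset G) (hA : 2 * A.card = Fintype.card G)
    (hinc : A + A ≠ Finset.univ) :
    ∃ (d : ℕ) (H : AddSubgroup G), d ∣ Fintype.card G ∧ 2 ∣ d ∧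
      (∀ g : G, g ∈ H ↔ ({g} : Finset G) + (A + A) = A + A) ∧
      H.index = d ∧
      (A + A).card = Fintype.card G - Fintype.card G / d ∧
      (A + A).card = (d - 1) * (Fintype.card G / d) := by
  classical
  set n := Fintype.card G with hn'
  set S := A + A with hS
  obtain ⟨c₀, hc₀⟩ : ∃ c, c ∉ S := by
    by_contra h
    push_neg at h
    exact hinc (Finset.eq_univ_iff_forall.2 h)
  set K := auxStab A with hK
  haveI : DecidablePred (· ∈ K) := fun g => decidable_of_iff ({g} + A = A) (auxStab_mem A g).symm
  have hcomplS : ∀ c, c ∉ S ↔ c - c₀ ∈ K := by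
    intro c
    constructor
    · intro hc
      exact (auxStab_mem A _).2 (aux_two A hA hc₀ hc)
    · intro hk hcS
      rw [hS, Finset.mem_add] at hcS
      obtain ⟨a, ha, b, hb, hab⟩ := hcS
      have h1 := aux_image_compl A hA hc₀
      have hc0b : c₀ - b ∈ Aᶜ := h1 ▸ Finset.mem_image_of_mem _ hb
      have hkc : {c - c₀} + Aᶜ = Aᶜ := aux_compl_stab ((auxStab_mem A _).1 hk)
      have hmem : (c - c₀) + (c₀ - b) ∈ {c - c₀} + Aᶜ := by
        rw [aux_singleton_add]
        exact Finset.mem_image_of_mem _ hc0b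
      rw [hkc] at hmem
      have heq : (c - c₀) + (c₀ - b) = a := by rw [← hab]; abel
      rw [heq] at hmem
      exact (Finset.mem_compl.1 hmem) ha
  set Kf : Finset G := Finset.univ.filter (· ∈ K) with hKf
  have hcardK : Nat.card K = Kf.card := by
    rw [Nat.card_eq_fintype_card, Fintype.card_subtype]
  have hScompl : Sᶜ = Kf.image (c₀ + ·) := by
    ext c
    simp only [Finset.mem_compl, Finset.mem_image, hKf, Finset.mem_filter, Finset.mem_univ,
      true_and]
    constructor
    · intro hc
      exact ⟨c - c₀, (hcomplS c).1 hc, by abel⟩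
    · rintro ⟨k, hk, rfl⟩
      rw [← Finset.mem_compl] at *
      rw [Finset.mem_compl]
      refine (hcomplS _).2 ?_
      simpa using hk
  have hTcard : Sᶜ.card = Kf.card := by
    rw [hScompl, Finset.card_image_of_injective _ (add_right_injective c₀)]
  have hinv : ∀ k ∈ K, ∀ a ∈ A, k + a ∈ A := by
    intro k hk a ha
    have h := (auxStab_mem A k).1 hk
    rw [← h, aux_singleton_add]
    exact Finset.mem_image_of_mem _ ha
  obtain ⟨m, hm⟩ := aux_card_stab_dvd K A hinv
  set d := K.index with hd
  have hdk : d * Nat.card K = n := by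
    rw [AddSubgroup.index_mul_card, Nat.card_eq_fintype_card]
  have hkpos : 0 < Nat.card K := Nat.card_pos
  have hnpos : 0 < n := Fintype.card_pos
  have hd2m : d = 2 * m := by
    have h : d * Nat.card K = (2 * m) * Nat.card K := by
      rw [hdk, ← hA, hm]; ring
    exact Nat.eq_of_mul_eq_mul_right hkpos h
  have hdpos : 0 < d := by
    rcases Nat.eq_zero_or_pos d with h | h
    · rw [h, zero_mul] at hdk; omega
    · exact h
  have hnd : n / d = Nat.card K := by
    rw [← hdk, Nat.mul_div_cancel_left _ hdpos]
  have hScard : S.card = n - Nat.card K := by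
    have h1 := Finset.card_compl S
    have h2 : S.card ≤ n := Finset.card_le_univ S
    omega
  have hHK : auxStab S = K := by
    ext g
    rw [auxStab_mem]
    constructor
    · intro hgS
      have hcompl : {g} + Sᶜ = Sᶜ := aux_compl_stab hgS
      have hgc : g + c₀ ∈ Sᶜ := by
        rw [← hcompl, aux_singleton_add]
        exact Finset.mem_image_of_mem _ (Finset.mem_compl.2 hc₀)
      have h := (hcomplS _).1 (Finset.mem_compl.1 hgc)
      simpa using h
    · intro hgA
      rw [hS, ← add_assoc, (auxStab_mem A g).1 hgA]
  refine ⟨d, auxStab S, ⟨_, hdk.symm⟩, ⟨m, hd2m⟩, fun g => Iff.rfl, ?_, ?_, ?_⟩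
  · rw [hHK]
  · rw [hnd, hScard]
  · rw [hnd, hScard, Nat.sub_mul, one_mul, hdk]
end

section
/- Let G be a finite abelian group of even order n whose exponent is congruent to 2 mod 4. Then there is no subset A of G with |A| = n/2 and |A + A| = 3n/4. -/
open Finset Pointwise

theorem stmt_11 {G : Type*} [AddCommGroup G] [Fintype G] [DecidableEq G]
    (hn : Even (Fintype.card G)) (hexp : AddMonoid.exponent G % 4 = 2)
    (A : Finset G) (hA : 2 * A.card = Fintype.card G) :
    4 * (A + A).card ≠ 3 * Fintype.card G := by
  classical
  intro hcard
  set n := Fintype.card G with hn'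
  have hnpos : 0 < n := Fintype.card_pos
  set H : AddSubgroup G := AddAction.stabilizer G A with hHdef
  have memH : ∀ h : G, h ∈ H ↔ h +ᵥ A = A := fun h => Iff.rfl
  have hstabmem : ∀ h : G, h ∈ H → ∀ a ∈ A, h + a ∈ A := by
    intro h hh a ha
    have hm : h + a ∈ h +ᵥ A := by
      rw [Finset.mem_vadd_finset]; exact ⟨a, ha, rfl⟩
    rwa [(memH h).1 hh] at hm
  -- for g outside A+A, the reflected set is the complement of A
  have himg : ∀ g : G, g ∉ A + A → A.image (fun a => g - a) = Aᶜ := by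
    intro g hg
    apply Finset.eq_of_subset_of_card_le
    · intro c hc
      simp only [Finset.mem_image] at hc
      obtain ⟨a, ha, rfl⟩ := hc
      rw [Finset.mem_compl]
      intro hmem
      apply hg
      have e : a + (g - a) = g := by abel
      exact e ▸ Finset.add_mem_add ha hmem
    · have h1 : (A.image fun a => g - a).card = A.card :=
        Finset.card_image_of_injective _ (fun a b hab => sub_right_injective hab)
      have h2 : Aᶜ.card = n - A.card := Finset.card_compl A
      have h3 : A.card ≤ n := Finset.card_le_univ A
      omega
  -- differences of elements outside A+A stabilize A
  have hdiff : ∀ g g' : G, g ∉ A + A → g' ∉ A + A → g - g' ∈ H := by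
    intro g g' hg hg'
    rw [memH]
    apply Finset.eq_of_subset_of_card_le
    · intro c hc
      rw [Finset.mem_vadd_finset] at hc
      obtain ⟨a, ha, rfl⟩ := hc
      have hmem : g' - a ∈ A.image (fun a => g - a) := by
        rw [himg g hg, ← himg g' hg']
        exact Finset.mem_image_of_mem _ ha
      simp only [Finset.mem_image] at hmem
      obtain ⟨a', ha', haa⟩ := hmem
      have key : ((g - g') + a) - a' = (g - a') - (g' - a) := by abel
      rw [haa, sub_self] at key
      have : (g - g') + a = a' := sub_eq_zero.mp key
      simpa [this] using ha'
    · rw [Finset.card_vadd_finset]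
  -- translates by H of elements outside A+A stay outside
  have hout : ∀ g : G, g ∉ A + A → ∀ h : G, h ∈ H → g + h ∉ A + A := by
    intro g hg h hh hmem
    rw [Finset.mem_add] at hmem
    obtain ⟨a, ha, b, hb, hab⟩ := hmem
    have hna : -h + a ∈ A := hstabmem (-h) (neg_mem hh) a ha
    apply hg
    rw [Finset.mem_add]
    refine ⟨-h + a, hna, b, hb, ?_⟩
    have key : ((-h + a) + b) - g = (a + b) - (g + h) := by abel
    rw [hab, sub_self] at key
    exact sub_eq_zero.mp key
  -- the complement of A+A
  have hScard : 4 * ((A + A)ᶜ).card = n := by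
    have h1 : ((A + A)ᶜ).card = n - (A + A).card := Finset.card_compl _
    have h2 : (A + A).card ≤ n := Finset.card_le_univ _
    omega
  obtain ⟨g0, hg0⟩ : ((A + A)ᶜ).Nonempty := Finset.card_pos.mp (by omega)
  have hg0' : g0 ∉ A + A := Finset.mem_compl.mp hg0
  set Hc : Finset G := univ.filter (· ∈ H) with hHcdef
  have memHc : ∀ h : G, h ∈ Hc ↔ h ∈ H := by intro h; simp [hHcdef]
  have hSeq : (A + A)ᶜ = g0 +ᵥ Hc := by
    ext g
    rw [Finset.mem_compl, Finset.mem_vadd_finset]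
    constructor
    · intro hg
      refine ⟨g - g0, (memHc _).mpr (hdiff g g0 hg hg0'), ?_⟩
      simp
    · rintro ⟨h, hh, rfl⟩
      exact hout g0 hg0' h ((memHc h).mp hh)
  have hHccard : 4 * Hc.card = n := by
    rw [hSeq, Finset.card_vadd_finset] at hScard; exact hScard
  have hHcpos : 0 < Hc.card := by omega
  -- coset membership
  have hcosetmem : ∀ c d : G, c ∈ d +ᵥ Hc ↔ c - d ∈ H := by
    intro c d
    rw [Finset.mem_vadd_finset]
    constructor
    · rintro ⟨h, hh, rfl⟩
      simpa using (memHc h).mp hh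
    · intro hcd
      exact ⟨c - d, (memHc _).mpr hcd, by simp⟩
  -- A is a union of two cosets
  have hApos : 0 < A.card := by omega
  obtain ⟨x, hx⟩ := Finset.card_pos.mp hApos
  have hxsub : x +ᵥ Hc ⊆ A := by
    intro c hc
    rw [Finset.mem_vadd_finset] at hc
    obtain ⟨h, hh, rfl⟩ := hc
    have := hstabmem h ((memHc h).mp hh) x hx
    simpa [add_comm] using this
  have hnotsub : ¬ A ⊆ x +ᵥ Hc := by
    intro hsub
    have := Finset.card_le_card hsub
    rw [Finset.card_vadd_finset] at this
    omega
  obtain ⟨y, hy, hyx⟩ := Finset.not_subset.mp hnotsub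
  have hyxH : y - x ∉ H := fun hmem => hyx ((hcosetmem y x).mpr hmem)
  have hysub : y +ᵥ Hc ⊆ A := by
    intro c hc
    rw [Finset.mem_vadd_finset] at hc
    obtain ⟨h, hh, rfl⟩ := hc
    have := hstabmem h ((memHc h).mp hh) y hy
    simpa [add_comm] using this
  have hdisj : Disjoint (x +ᵥ Hc) (y +ᵥ Hc) := by
    rw [Finset.disjoint_left]
    intro c hc1 hc2
    rw [hcosetmem] at hc1 hc2
    apply hyxH
    have e : (c - x) - (c - y) = y - x := by abel
    exact e ▸ sub_mem hc1 hc2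
  have hAeq : A = (x +ᵥ Hc) ∪ (y +ᵥ Hc) := by
    refine (Finset.eq_of_subset_of_card_le (Finset.union_subset hxsub hysub) ?_).symm
    rw [Finset.card_union_of_disjoint hdisj, Finset.card_vadd_finset, Finset.card_vadd_finset]
    omega
  -- A + A is inside three cosets
  have key : ∀ c d a b : G, a ∈ c +ᵥ Hc → b ∈ d +ᵥ Hc → a + b ∈ (c + d) +ᵥ Hc := by
    intro c d a b ha hb
    rw [hcosetmem] at ha hb ⊢
    have e : (a + b) - (c + d) = (a - c) + (b - d) := by abel
    exact e ▸ add_mem ha hb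
  have hAAsub : A + A ⊆ ((x + x) +ᵥ Hc) ∪ ((x + y) +ᵥ Hc) ∪ ((y + y) +ᵥ Hc) := by
    intro c hc
    rw [Finset.mem_add] at hc
    obtain ⟨a, ha, b, hb, rfl⟩ := hc
    rw [hAeq, Finset.mem_union] at ha hb
    simp only [Finset.mem_union]
    rcases ha with ha | ha <;> rcases hb with hb | hb
    · exact Or.inl (Or.inl (key _ _ _ _ ha hb))
    · exact Or.inl (Or.inr (key _ _ _ _ ha hb))
    · refine Or.inl (Or.inr ?_)
      have := key _ _ _ _ ha hb
      rwa [add_comm y x] at this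
    · exact Or.inr (key _ _ _ _ ha hb)
  have hAAcard : (A + A).card = 3 * Hc.card := by omega
  -- the two "doubled" cosets are distinct
  have h2z : (x + x) - (y + y) ∉ H := by
    intro hmem
    have hsub2 : A + A ⊆ ((x + x) +ᵥ Hc) ∪ ((x + y) +ᵥ Hc) := by
      intro c hc
      have hc3 := hAAsub hc
      simp only [Finset.mem_union] at hc3 ⊢
      rcases hc3 with (h' | h') | h'
      · exact Or.inl h'
      · exact Or.inr h'
      · left
        rw [hcosetmem] at h' ⊢
        have e : (c - (y + y)) - ((x + x) - (y + y)) = c - (x + x) := by abel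
        exact e ▸ sub_mem h' hmem
    have hle := Finset.card_le_card hsub2
    have hun := Finset.card_union_le ((x + x) +ᵥ Hc) ((x + y) +ᵥ Hc)
    rw [Finset.card_vadd_finset, Finset.card_vadd_finset] at hun
    omega
  -- pass to the quotient
  have hcardH : Nat.card H = Hc.card := by
    rw [Nat.card_eq_fintype_card, Fintype.card_subtype]
  have hq := AddSubgroup.card_eq_card_quotient_mul_card_addSubgroup H
  rw [hcardH, Nat.card_eq_fintype_card, ← hn'] at hq
  have hcardQ : Nat.card (G ⧸ H) = 4 := by
    apply Nat.eq_of_mul_eq_mul_right hHcpos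
    rw [hHccard]
    exact hq.symm
  set z := x - y with hzdef
  have hz1 : (z : G ⧸ H) ≠ 0 := by
    intro h
    rw [QuotientAddGroup.eq_zero_iff] at h
    apply hyxH
    have e : -(x - y) = y - x := by abel
    exact e ▸ neg_mem h
  have hz2 : ((z + z : G) : G ⧸ H) ≠ 0 := by
    intro hmemeq
    rw [QuotientAddGroup.eq_zero_iff] at hmemeq
    have hmem := hmemeq
    apply h2z
    have e : (x + x) - (y + y) = z + z := by rw [hzdef]; abel
    exact e ▸ hmem
  have hd : addOrderOf (z : G ⧸ H) ∣ 4 := hcardQ ▸ addOrderOf_dvd_natCard _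
  have h1 : addOrderOf (z : G ⧸ H) ≠ 1 := fun h => hz1 (AddMonoid.addOrderOf_eq_one_iff.mp h)
  have h2' : addOrderOf (z : G ⧸ H) ≠ 2 := by
    intro h
    have h0 : addOrderOf (z : G ⧸ H) • (z : G ⧸ H) = 0 := addOrderOf_nsmul_eq_zero _
    rw [h, two_nsmul] at h0
    exact hz2 (by rw [QuotientAddGroup.mk_add]; exact h0)
  have horder : addOrderOf (z : G ⧸ H) = 4 := by
    have hle : addOrderOf (z : G ⧸ H) ≤ 4 := Nat.le_of_dvd (by norm_num) hd
    have hpos : 0 < addOrderOf (z : G ⧸ H) := Nat.pos_of_dvd_of_pos hd (by norm_num)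
    interval_cases h : addOrderOf (z : G ⧸ H)
    · exact absurd rfl h1
    · exact absurd rfl h2'
    · norm_num at hd
    · rfl
  have h4exp : (4 : ℕ) ∣ AddMonoid.exponent (G ⧸ H) :=
    horder ▸ AddMonoid.addOrder_dvd_exponent (z : G ⧸ H)
  have hdvd : AddMonoid.exponent (G ⧸ H) ∣ AddMonoid.exponent G :=
    AddMonoidHom.exponent_dvd (f := QuotientAddGroup.mk' H) (QuotientAddGroup.mk'_surjective H)
  have h4 : (4 : ℕ) ∣ AddMonoid.exponent G := dvd_trans h4exp hdvd
  omega
end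

section
/- Let K be a finite abelian group of even order d > 4, H a subgroup of index 2 in K, h ∈ H, and g ∈ K \ H. Then the set B = (H \ {h}) ∪ {g} satisfies |B| = d/2 and B + B = K \ {h + g}, so |B + B| = d − 1. -/
/-!
Every `x ∈ H` is a sum `c + (x - c)` of two elements of `H \ {h}` once `c` avoids both `h` and
`x - h`, which is possible as `|H| = d / 2 > 2`; every element `x` of the coset `K \ H` is
`(x - g) + g` with `x - g ∈ H`, and `x - g = h` only for `x = h + g`. Conversely, sums of two
elements of `B` lie in `H` unless exactly one summand is `g`, and then they differ from `h + g`
because `h ∉ B`.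
-/

open Pointwise

theorem Set.exists_mem_ne_ne_of_two_lt_ncard {α : Type*} {s : Set α} (hs : 2 < s.ncard)
    (a b : α) : ∃ c ∈ s, c ≠ a ∧ c ≠ b := by
  by_contra! hab
  have hsub : s ⊆ {a, b} := fun c hc => (eq_or_ne c a).imp_right (hab c hc)
  have := Set.ncard_le_ncard hsub (Set.toFinite _)
  have := Set.ncard_insert_le a {b}
  rw [Set.ncard_singleton] at this
  omega

namespace AddSubgroup

variable {K : Type*} [AddCommGroup K] {H : AddSubgroup K}

theorem sub_mem_of_notMem_of_index_two (hH : H.index = 2) {x g : K} (hx : x ∉ H)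
    (hg : g ∉ H) : x - g ∈ H := by
  rw [sub_eq_add_neg, add_mem_iff_of_index_two hH, neg_mem_iff]
  exact iff_of_false hx hg

variable {h g : K}

theorem add_ne_of_mem_insert_diff_singleton (hH : H.index = 2) (hh : h ∈ H) (hg : g ∉ H)
    {a b : K} (ha : a ∈ insert g ((H : Set K) \ {h})) (hb : b ∈ insert g ((H : Set K) \ {h})) :
    a + b ≠ h + g := by
  have hhg : h + g ∉ H := (add_mem_cancel_left hh).not.mpr hg
  intro hab
  simp only [Set.mem_insert_iff, Set.mem_sdiff, SetLike.mem_coe, Set.mem_singleton_iff] at ha hb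
  rcases ha with rfl | ⟨haH, hah⟩ <;> rcases hb with hb | ⟨hbH, hbh⟩
  · exact hhg (hab ▸ hb ▸ add_self_mem_of_index_two hH a)
  · exact hbh (add_left_cancel (hab.trans (add_comm h a)))
  · exact hah (add_right_cancel (hb ▸ hab))
  · exact hhg (hab ▸ add_mem haH hbH)

theorem exists_add_eq_of_ne (hH : H.index = 2) (hcard : 2 < Nat.card H) (hg : g ∉ H)
    {x : K} (hx : x ≠ h + g) :
    ∃ a ∈ insert g ((H : Set K) \ {h}), ∃ b ∈ insert g ((H : Set K) \ {h}), a + b = x := by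
  simp only [Set.mem_insert_iff, Set.mem_sdiff, SetLike.mem_coe, Set.mem_singleton_iff]
  by_cases hxH : x ∈ H
  · obtain ⟨c, hcH, hch, hcx⟩ :=
      Set.exists_mem_ne_ne_of_two_lt_ncard (s := H) (by rwa [← Nat.card_coe_set_eq]) h (x - h)
    refine ⟨c, .inr ⟨hcH, hch⟩, x - c, .inr ⟨sub_mem hxH hcH, fun hxc => hcx ?_⟩,
      add_sub_cancel c x⟩
    rw [← hxc, sub_sub_cancel]
  · refine ⟨x - g, .inr ⟨sub_mem_of_notMem_of_index_two hH hxH hg, fun hxg => hx ?_⟩,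
      g, .inl rfl, sub_add_cancel x g⟩
    rw [← hxg, sub_add_cancel]

theorem insert_diff_singleton_add_self (hH : H.index = 2) (hcard : 2 < Nat.card H) (hh : h ∈ H)
    (hg : g ∉ H) :
    insert g ((H : Set K) \ {h}) + insert g ((H : Set K) \ {h}) = {h + g}ᶜ := by
  ext x
  rw [Set.mem_add, Set.mem_compl_singleton_iff]
  exact ⟨fun ⟨a, ha, b, hb, hab⟩ =>
    hab ▸ add_ne_of_mem_insert_diff_singleton hH hh hg ha hb, exists_add_eq_of_ne hH hcard hg⟩

end AddSubgroup

open Finset Pointwise Classical in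
theorem stmt_12_general {K : Type*} [AddCommGroup K] [Fintype K] [DecidableEq K]
    (d : ℕ) (hd : Fintype.card K = d) (hd4 : 4 < d)
    (H : AddSubgroup K) (hH : H.index = 2)
    (h : K) (hh : h ∈ H) (g : K) (hg : g ∉ H) :
    let B : Finset K := insert g ((Finset.univ.filter (fun x => x ∈ H)).erase h)
    B.card = d / 2 ∧ B + B = Finset.univ \ {h + g} ∧ (B + B).card = d - 1 := by
  intro B
  have hcardH : 2 * Nat.card H = d := by
    rw [← hH, AddSubgroup.index_mul_card, Nat.card_eq_fintype_card, hd]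
  have hcoe : (B : Set K) = insert g ((H : Set K) \ {h}) := by
    ext x
    simp [B]
  have hBB : B + B = univ \ {h + g} := by
    apply coe_injective
    rw [coe_add, hcoe, AddSubgroup.insert_diff_singleton_add_self hH (by omega) hh hg,
      coe_sdiff, coe_univ, coe_singleton, Set.compl_eq_univ_sdiff]
  refine ⟨?_, hBB, ?_⟩
  · have hgB : g ∉ (univ.filter (fun x => x ∈ H)).erase h := by simp [hg]
    rw [card_insert_of_notMem hgB, card_erase_of_mem (by simpa using hh)]
    have hcardS : #(univ.filter (fun x => x ∈ H)) = Nat.card H := by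
      rw [Nat.card_eq_fintype_card, Fintype.card_subtype]
    omega
  · rw [hBB, card_sdiff_of_subset (subset_univ _), card_singleton, card_univ, hd]

open Finset Pointwise Classical in
theorem stmt_12 {K : Type*} [AddCommGroup K] [Fintype K] [DecidableEq K]
    (d : ℕ) (hd : Fintype.card K = d) (hdeven : Even d) (hd4 : 4 < d)
    (H : AddSubgroup K) (hH : H.index = 2)
    (h : K) (hh : h ∈ H) (g : K) (hg : g ∉ H) :
    let B : Finset K := insert g ((Finset.univ.filter (fun x => x ∈ H)).erase h)
    B.card = d / 2 ∧ B + B = Finset.univ \ {h + g} ∧ (B + B).card = d - 1 :=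
  stmt_12_general d hd hd4 H hH h hh g hg
end

section
/- Let G be a finite abelian group of order n divisible by 3 with no prime divisor of n congruent to 2 mod 3. If A ⊆ G has |A| = n/3 and 3A ≠ G, then |3A| ≠ 2n/3. -/
open Finset Pointwise

namespace Stmt16Aux

variable {G : Type*} [AddCommGroup G] [Fintype G] [DecidableEq G]

lemma card_add_single (s : Finset G) (c : G) : (s + {c}).card = s.card := by
  rw [show s + {c} = s.image (· + c) by
    ext x; simp only [Finset.mem_add, Finset.mem_singleton, Finset.mem_image]
    constructor
    · rintro ⟨a, ha, b, hb, rfl⟩; exact ⟨a, ha, by rw [hb]⟩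
    · rintro ⟨a, ha, rfl⟩; exact ⟨a, ha, c, rfl, rfl⟩]
  exact Finset.card_image_of_injective _ (add_left_injective c)

lemma add_single_ne_univ {s : Finset G} (h : s ≠ univ) (c : G) : s + {c} ≠ univ := by
  intro hc
  apply h
  apply Finset.eq_univ_of_card
  have := card_add_single s c
  rw [hc, Finset.card_univ] at this
  omega

/-- The family of "good" test sets. -/
def Good (A X : Finset G) : Prop := X.Nonempty ∧ X + A ≠ Finset.univ

/-- The isoperimetric constant (Hamidoune connectivity). -/
noncomputable def kap (A : Finset G) : ℕ :=
  sInf {k | ∃ X : Finset G, Good A X ∧ (X + A).card = X.card + k}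

/-- Minimum size of a fragment (atom size). -/
noncomputable def amu (A : Finset G) : ℕ :=
  sInf {m | ∃ X : Finset G, Good A X ∧ (X + A).card = X.card + kap A ∧ X.card = m}

variable {A : Finset G}

lemma subset_add (h0 : (0:G) ∈ A) (X : Finset G) : X ⊆ X + A := fun x hx =>
  Finset.mem_add.mpr ⟨x, hx, 0, h0, add_zero x⟩

lemma kapSet_nonempty (h0 : (0:G) ∈ A) (hU : A ≠ univ) :
    {k | ∃ X : Finset G, Good A X ∧ (X + A).card = X.card + k}.Nonempty := by
  refine ⟨A.card - 1, {0}, ⟨Finset.singleton_nonempty 0, ?_⟩, ?_⟩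
  · rwa [show ({0} : Finset G) + A = A by ext x; simp [Finset.mem_add]]
  · rw [show ({0} : Finset G) + A = A by ext x; simp [Finset.mem_add]]
    have : 0 < A.card := Finset.card_pos.mpr ⟨0, h0⟩
    simp only [Finset.card_singleton]
    omega

lemma kap_le (h0 : (0:G) ∈ A) {X : Finset G} (hX : Good A X) :
    X.card + kap A ≤ (X + A).card := by
  have hsub := Finset.card_le_card (subset_add h0 X)
  have h1 : kap A ≤ (X + A).card - X.card :=
    Nat.sInf_le ⟨X, hX, by omega⟩
  omega

lemma exists_frag (h0 : (0:G) ∈ A) (hU : A ≠ univ) :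
    ∃ X : Finset G, Good A X ∧ (X + A).card = X.card + kap A :=
  Nat.sInf_mem (kapSet_nonempty h0 hU)

lemma exists_atom (h0 : (0:G) ∈ A) (hU : A ≠ univ) :
    ∃ X : Finset G, Good A X ∧ (X + A).card = X.card + kap A ∧ X.card = amu A := by
  obtain ⟨X, hX, hfr⟩ := exists_frag h0 hU
  have : {m | ∃ X : Finset G, Good A X ∧ (X + A).card = X.card + kap A ∧ X.card = m}.Nonempty :=
    ⟨X.card, X, hX, hfr, rfl⟩
  exact Nat.sInf_mem this

lemma amu_le {X : Finset G} (hX : Good A X) (hfr : (X + A).card = X.card + kap A) :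
    amu A ≤ X.card :=
  Nat.sInf_le ⟨X, hX, hfr, rfl⟩

lemma frag_translate (c : G) {X : Finset G} (hX : Good A X)
    (hfr : (X + A).card = X.card + kap A) :
    Good A (X + {c}) ∧ ((X + {c}) + A).card = (X + {c}).card + kap A ∧
      (X + {c}).card = X.card := by
  have hcomm : (X + {c}) + A = (X + A) + {c} := add_right_comm X {c} A
  have hc1 : (X + {c}).card = X.card := card_add_single X c
  have hc2 : ((X + {c}) + A).card = (X + A).card := by rw [hcomm]; exact card_add_single _ c
  refine ⟨⟨?_, ?_⟩, by omega, hc1⟩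
  · obtain ⟨x, hx⟩ := hX.1
    exact ⟨x + c, Finset.mem_add.mpr ⟨x, hx, c, Finset.mem_singleton_self c, rfl⟩⟩
  · rw [hcomm]; exact add_single_ne_univ hX.2 c

lemma neg_zero_mem (h0 : (0:G) ∈ A) : (0:G) ∈ -A := by
  rw [Finset.mem_neg]; exact ⟨0, h0, neg_zero⟩

lemma neg_ne_univ (hU : A ≠ univ) : -A ≠ univ := by
  intro h
  apply hU
  apply Finset.eq_univ_of_card
  rw [← Finset.card_neg, h, Finset.card_univ]

lemma kap_neg_le (h0 : (0:G) ∈ A) (hU : A ≠ univ) : kap (-A) ≤ kap A := by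
  obtain ⟨X, hX, hfr⟩ := exists_frag h0 hU
  set P : Finset G := (X + A)ᶜ with hP
  have hPcard : P.card = Fintype.card G - (X + A).card := Finset.card_compl _
  have hXAlt : (X + A).card < Fintype.card G := by
    have := Finset.card_lt_card (Finset.ssubset_univ_iff.mpr hX.2)
    rwa [Finset.card_univ] at this
  have hPne : P.Nonempty := Finset.card_pos.mp (by omega)
  have hsub : P + (-A) ⊆ Xᶜ := by
    intro y hy
    obtain ⟨p, hp, b, hb, rfl⟩ := Finset.mem_add.mp hy
    rw [Finset.mem_neg] at hb
    obtain ⟨a, ha, rfl⟩ := hb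
    rw [Finset.mem_compl]
    intro hmem
    have : p ∈ X + A := Finset.mem_add.mpr ⟨p + -a, hmem, a, ha, by abel⟩
    rw [hP] at hp
    exact (Finset.mem_compl.mp hp) this
  have hPU : P + (-A) ≠ univ := by
    intro h
    obtain ⟨x, hx⟩ := hX.1
    have : x ∈ Xᶜ := hsub (h ▸ Finset.mem_univ x)
    exact Finset.mem_compl.mp this hx
  have hPsub : P ⊆ P + (-A) := subset_add (neg_zero_mem h0) P
  have hcle : (P + (-A)).card ≤ Fintype.card G - X.card := by
    have h1 : (P + (-A)).card ≤ Xᶜ.card := Finset.card_le_card hsub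
    rw [Finset.card_compl] at h1
    exact h1
  have hXle : X.card + kap A ≤ Fintype.card G := by
    have := Finset.card_le_univ (X + A)
    omega
  have hk : kap (-A) ≤ (P + (-A)).card - P.card := by
    refine Nat.sInf_le ⟨P, ⟨hPne, hPU⟩, ?_⟩
    have := Finset.card_le_card hPsub
    omega
  have hPc := Finset.card_le_card hPsub
  omega

lemma kap_neg_eq (h0 : (0:G) ∈ A) (hU : A ≠ univ) : kap (-A) = kap A := by
  refine le_antisymm (kap_neg_le h0 hU) ?_
  have := kap_neg_le (neg_zero_mem h0) (neg_ne_univ hU)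
  rwa [neg_neg] at this

lemma neg_add_finset (s t : Finset G) : -(s + t) = (-s) + (-t) := by
  ext x; simp only [Finset.mem_neg, Finset.mem_add]
  constructor
  · rintro ⟨y, ⟨a, ha, b, hb, rfl⟩, rfl⟩
    exact ⟨-a, ⟨a, ha, rfl⟩, -b, ⟨b, hb, rfl⟩, (neg_add a b).symm⟩
  · rintro ⟨a', ⟨a, ha, rfl⟩, b', ⟨b, hb, rfl⟩, rfl⟩
    exact ⟨a + b, ⟨a, ha, b, hb, rfl⟩, neg_add a b⟩

lemma amu_neg_le (h0 : (0:G) ∈ A) (hU : A ≠ univ) : amu (-A) ≤ amu A := by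
  obtain ⟨H, hH, hfr, hcard⟩ := exists_atom h0 hU
  have hgood : Good (-A) (-H) := by
    constructor
    · obtain ⟨x, hx⟩ := hH.1
      exact ⟨-x, by rw [Finset.mem_neg]; exact ⟨x, hx, rfl⟩⟩
    · rw [← neg_add_finset]
      exact neg_ne_univ hH.2
  have hcardeq : ((-H) + (-A)).card = (-H).card + kap (-A) := by
    rw [← neg_add_finset, Finset.card_neg, Finset.card_neg, hfr, kap_neg_eq h0 hU]
  have := amu_le hgood hcardeq
  rw [Finset.card_neg, hcard] at this
  exact this

lemma amu_neg_eq (h0 : (0:G) ∈ A) (hU : A ≠ univ) : amu (-A) = amu A := by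
  refine le_antisymm (amu_neg_le h0 hU) ?_
  have := amu_neg_le (neg_zero_mem h0) (neg_ne_univ hU)
  rwa [neg_neg] at this

/-- Key bound: 2μ + κ ≤ n. -/
lemma two_amu_add_kap_le (h0 : (0:G) ∈ A) (hU : A ≠ univ) :
    amu A + (amu A + kap A) ≤ Fintype.card G := by
  obtain ⟨H, hH, hfr, hcard⟩ := exists_atom h0 hU
  set P : Finset G := (H + A)ᶜ with hP
  have hPcard : P.card = Fintype.card G - (H + A).card := Finset.card_compl _
  have hHAlt : (H + A).card < Fintype.card G := by
    have := Finset.card_lt_card (Finset.ssubset_univ_iff.mpr hH.2)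
    rwa [Finset.card_univ] at this
  have hPne : P.Nonempty := Finset.card_pos.mp (by omega)
  have hsub : P + (-A) ⊆ Hᶜ := by
    intro y hy
    obtain ⟨p, hp, b, hb, rfl⟩ := Finset.mem_add.mp hy
    rw [Finset.mem_neg] at hb
    obtain ⟨a, ha, rfl⟩ := hb
    rw [Finset.mem_compl]
    intro hmem
    have : p ∈ H + A := Finset.mem_add.mpr ⟨p + -a, hmem, a, ha, by abel⟩
    rw [hP] at hp
    exact (Finset.mem_compl.mp hp) this
  have hPU : P + (-A) ≠ univ := by
    intro h
    obtain ⟨x, hx⟩ := hH.1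
    exact Finset.mem_compl.mp (hsub (h ▸ Finset.mem_univ x)) hx
  have hPsub : P ⊆ P + (-A) := subset_add (neg_zero_mem h0) P
  have hcle : (P + (-A)).card ≤ Fintype.card G - H.card := by
    have h1 : (P + (-A)).card ≤ Hᶜ.card := Finset.card_le_card hsub
    rw [Finset.card_compl] at h1
    exact h1
  have hge : P.card + kap (-A) ≤ (P + (-A)).card := kap_le (neg_zero_mem h0) ⟨hPne, hPU⟩
  have hkneg := kap_neg_eq h0 hU
  -- exact fragment for -A
  have hfrP : (P + (-A)).card = P.card + kap (-A) := by omega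
  have hmule : amu (-A) ≤ P.card := amu_le ⟨hPne, hPU⟩ hfrP
  have hmuneg := amu_neg_eq h0 hU
  omega

/-- Hamidoune: the atom (translated to contain 0) is closed under addition. -/
lemma atom_add_closed (h0 : (0:G) ∈ A) (hU : A ≠ univ) :
    ∃ H : Finset G, (0:G) ∈ H ∧ (∀ a ∈ H, ∀ b ∈ H, a + b ∈ H) ∧
      H + A ≠ univ ∧ (H + A).card = H.card + kap A ∧ H.card = amu A := by
  obtain ⟨H₀, hH₀, hfr₀, hcard₀⟩ := exists_atom h0 hU
  obtain ⟨x₀, hx₀⟩ := hH₀.1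
  obtain ⟨hHg, hHfr, hHc⟩ := frag_translate (-x₀) hH₀ hfr₀
  set H : Finset G := H₀ + {-x₀} with hHdef
  have h0H : (0:G) ∈ H :=
    Finset.mem_add.mpr ⟨x₀, hx₀, -x₀, Finset.mem_singleton_self _, add_neg_cancel x₀⟩
  have hHcard : H.card = amu A := by rw [hHc, hcard₀]
  -- main claim: for b ∈ H, H + {b} = H
  have key : ∀ b ∈ H, H + {b} = H := by
    intro b hb
    obtain ⟨hYg, hYfr, hYc⟩ := frag_translate b hHg hHfr
    set Y : Finset G := H + {b} with hYdef
    have hYcard : Y.card = amu A := by rw [hYc, hHcard]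
    have hbY : b ∈ Y :=
      Finset.mem_add.mpr ⟨0, h0H, b, Finset.mem_singleton_self _, zero_add b⟩
    have hbI : b ∈ H ∩ Y := Finset.mem_inter.mpr ⟨hb, hbY⟩
    have hIne : (H ∩ Y).Nonempty := ⟨b, hbI⟩
    have hIU : (H ∩ Y) + A ≠ univ := by
      intro h
      apply hHg.2
      have hs : (H ∩ Y) + A ⊆ H + A :=
        Finset.add_subset_add_right Finset.inter_subset_left
      exact Finset.univ_subset_iff.mp (h ▸ hs)
    have hIgood : Good A (H ∩ Y) := ⟨hIne, hIU⟩
    have hIsub : (H ∩ Y) + A ⊆ (H + A) ∩ (Y + A) :=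
      Finset.subset_inter
        (Finset.add_subset_add_right Finset.inter_subset_left)
        (Finset.add_subset_add_right Finset.inter_subset_right)
    have hUeq : (H ∪ Y) + A = (H + A) ∪ (Y + A) := Finset.union_add
    have hcui : (H ∪ Y).card + (H ∩ Y).card = H.card + Y.card :=
      Finset.card_union_add_card_inter H Y
    have hcui2 : ((H + A) ∪ (Y + A)).card + ((H + A) ∩ (Y + A)).card
        = (H + A).card + (Y + A).card :=
      Finset.card_union_add_card_inter _ _
    have hIle : (H ∩ Y).card + kap A ≤ ((H ∩ Y) + A).card := kap_le h0 hIgood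
    have hIle2 : ((H ∩ Y) + A).card ≤ ((H + A) ∩ (Y + A)).card :=
      Finset.card_le_card hIsub
    have hIcard_pos : 1 ≤ (H ∩ Y).card := Finset.card_pos.mpr hIne
    have hkey := two_amu_add_kap_le h0 hU
    by_cases hc : (H ∪ Y) + A = univ
    · exfalso
      have hn : ((H + A) ∪ (Y + A)).card = Fintype.card G := by
        rw [← hUeq, hc, Finset.card_univ]
      omega
    · -- H ∪ Y good
      have hUgood : Good A (H ∪ Y) := ⟨⟨b, Finset.mem_union_left _ hb⟩, hc⟩
      have hUle : (H ∪ Y).card + kap A ≤ ((H ∪ Y) + A).card := kap_le h0 hUgood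
      rw [hUeq] at hUle
      -- forces (H ∩ Y) to be a fragment
      have hIfr : ((H ∩ Y) + A).card = (H ∩ Y).card + kap A := by omega
      have hIamu : amu A ≤ (H ∩ Y).card := amu_le hIgood hIfr
      have hIcard : (H ∩ Y).card = H.card := by
        have := Finset.card_le_card (Finset.inter_subset_left : H ∩ Y ⊆ H)
        omega
      have hHY : H ∩ Y = H := Finset.eq_of_subset_of_card_le Finset.inter_subset_left
        (by omega)
      have hHsubY : H ⊆ Y := by rw [← hHY]; exact Finset.inter_subset_right
      have : H = Y := Finset.eq_of_subset_of_card_le hHsubY (by omega)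
      exact this.symm
  refine ⟨H, h0H, ?_, hHg.2, hHfr, hHcard⟩
  intro a ha b hb
  have := key b hb
  rw [← this]
  exact Finset.mem_add.mpr ⟨a, ha, b, Finset.mem_singleton_self _, rfl⟩

lemma nsmul_mem_closed {H : Finset G} (hc : ∀ a ∈ H, ∀ b ∈ H, a + b ∈ H)
    {a : G} (ha : a ∈ H) : ∀ k : ℕ, (k + 1) • a ∈ H := by
  intro k
  induction k with
  | zero => simpa using ha
  | succ m ih =>
    have : (m + 1 + 1) • a = (m + 1) • a + a := succ_nsmul a (m + 1)
    rw [this]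
    exact hc _ ih _ ha

lemma neg_mem_closed {H : Finset G} (h0 : (0:G) ∈ H)
    (hc : ∀ a ∈ H, ∀ b ∈ H, a + b ∈ H) {a : G} (ha : a ∈ H) : -a ∈ H := by
  have hk : addOrderOf a • a = 0 := addOrderOf_nsmul_eq_zero a
  have hkpos : 0 < addOrderOf a := addOrderOf_pos a
  rcases Nat.exists_eq_succ_of_ne_zero (Nat.pos_iff_ne_zero.mp hkpos) with ⟨m, hm⟩
  rcases Nat.eq_zero_or_pos m with hm0 | hmpos
  · -- order 1: a = 0
    rw [hm, hm0] at hk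
    simp only [one_nsmul] at hk
    rw [hk, neg_zero]; exact h0
  · rcases Nat.exists_eq_succ_of_ne_zero (Nat.pos_iff_ne_zero.mp hmpos) with ⟨l, hl⟩
    have hmem : (l + 1) • a ∈ H := nsmul_mem_closed hc ha l
    have heq : (l + 1) • a + a = 0 := by
      rw [← succ_nsmul a (l + 1)]
      rw [hm, hl] at hk
      exact hk
    have h2 : (l + 1) • a = -a := eq_neg_of_add_eq_zero_left heq
    rw [← h2]; exact hmem

lemma card_dvd_stable (H : Finset G) (h0 : (0:G) ∈ H)
    (hc : ∀ a ∈ H, ∀ b ∈ H, a + b ∈ H) :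
    ∀ S : Finset G, (∀ p ∈ H, ∀ s ∈ S, p + s ∈ S) → H.card ∣ S.card := by
  intro S
  induction S using Finset.strongInduction with
  | _ S ih =>
    intro hst
    rcases S.eq_empty_or_nonempty with hS | ⟨x, hx⟩
    · simp [hS]
    · set C : Finset G := H.image (· + x) with hC
      have hCsub : C ⊆ S := by
        intro y hy
        obtain ⟨p, hp, rfl⟩ := Finset.mem_image.mp hy
        exact hst p hp x hx
      have hxC : x ∈ C := Finset.mem_image.mpr ⟨0, h0, zero_add x⟩
      have hCcard : C.card = H.card := Finset.card_image_of_injective _ (add_left_injective x)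
      set S' : Finset G := S \ C with hS'
      have hS'ss : S' ⊂ S := by
        refine (Finset.ssubset_iff_of_subset (Finset.sdiff_subset)).mpr ⟨x, hx, ?_⟩
        simp [hS', hxC]
      have hst' : ∀ p ∈ H, ∀ s ∈ S', p + s ∈ S' := by
        intro p hp s hs
        rw [hS', Finset.mem_sdiff] at hs ⊢
        refine ⟨hst p hp s hs.1, ?_⟩
        intro hmem
        apply hs.2
        obtain ⟨q, hq, hqe⟩ := Finset.mem_image.mp hmem
        have hqp : q + -p ∈ H := hc q hq _ (neg_mem_closed h0 hc hp)
        refine Finset.mem_image.mpr ⟨q + -p, hqp, ?_⟩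
        have : s = q + -p + x := by
          have : q + x = p + s := hqe.symm ▸ rfl
          have h2 : q + x - p = s := by rw [this]; abel
          rw [← h2]; abel
        rw [← this]
      have hdvd' : H.card ∣ S'.card := ih S' hS'ss hst'
      have hcard : S.card = S'.card + H.card := by
        rw [hS', Finset.card_sdiff_of_subset hCsub, hCcard]
        have := Finset.card_le_card hCsub
        omega
      rw [hcard]
      exact Nat.dvd_add hdvd' dvd_rfl

lemma card_dvd_univ (H : Finset G) (h0 : (0:G) ∈ H)
    (hc : ∀ a ∈ H, ∀ b ∈ H, a + b ∈ H) : H.card ∣ Fintype.card G := by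
  have := card_dvd_stable H h0 hc Finset.univ (fun p _ s _ => Finset.mem_univ _)
  rwa [Finset.card_univ] at this

end Stmt16Aux

open Stmt16Aux in
theorem stmt_16 {G : Type*} [AddCommGroup G] [Fintype G] [DecidableEq G]
    (h3 : 3 ∣ Fintype.card G)
    (hnop : ∀ q : ℕ, q.Prime → q ∣ Fintype.card G → q % 3 ≠ 2)
    (A : Finset G) (hA : 3 * A.card = Fintype.card G)
    (hinc : A + A + A ≠ Finset.univ) :
    3 * (A + A + A).card ≠ 2 * Fintype.card G := by
  intro hcard
  classical
  have hnpos : 0 < Fintype.card G := Fintype.card_pos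
  set n := Fintype.card G with hn
  set s := A.card with hs
  have hApos : 0 < s := by omega
  obtain ⟨a₀, ha₀⟩ := Finset.card_pos.mp hApos
  obtain ⟨B, hB⟩ : ∃ B : Finset G, B = A + {-a₀} := ⟨_, rfl⟩
  have hBcard : B.card = s := by rw [hB]; exact card_add_single A (-a₀)
  have h0B : (0:G) ∈ B := by
    rw [hB]
    exact Finset.mem_add.mpr ⟨a₀, ha₀, -a₀, Finset.mem_singleton_self _, add_neg_cancel a₀⟩
  have hBBB : B + B + B = (A + A + A) + ({-a₀} + {-a₀} + {-a₀}) := by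
    rw [hB]; abel
  have hsingle : ({-a₀} : Finset G) + {-a₀} + {-a₀} = {-a₀ + -a₀ + -a₀} := by
    rw [Finset.singleton_add_singleton, Finset.singleton_add_singleton]
  have h3card : (B + B + B).card = 2 * s := by
    rw [hBBB, hsingle, card_add_single]
    omega
  have hsn : n = 3 * s := hA.symm
  have hBU : B ≠ univ := by
    intro h
    rw [h, Finset.card_univ] at hBcard
    omega
  have hBBBU : B + B + B ≠ univ := by
    intro h
    rw [h, Finset.card_univ] at h3card
    omega
  have hBBU : B + B ≠ univ := by
    intro h
    apply hBBBU
    rw [← Finset.univ_subset_iff]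
    intro x _
    have hx : x ∈ B + B := h ▸ Finset.mem_univ x
    exact Finset.mem_add.mpr ⟨x, hx, 0, h0B, add_zero x⟩
  by_cases hcl : AddSubgroup.closure (B : Set G) = ⊤
  · -- generating case: use the atom machinery
    obtain ⟨H, hH0, hHc, hHU, hHcard, _⟩ := atom_add_closed h0B hBU
    set κ := kap B with hκ
    -- κ ≥ 1
    have hκpos : 1 ≤ κ := by
      by_contra hκ0
      have hκe : κ = 0 := by omega
      have hHBsub : H ⊆ H + B := subset_add h0B H
      have hHB : H + B = H := by
        refine (Finset.eq_of_subset_of_card_le hHBsub ?_).symm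
        omega
      -- stabilizer subgroup
      set L : AddSubgroup G :=
        { carrier := {g | ∀ x ∈ H, x + g ∈ H}
          zero_mem' := by intro x hx; simpa using hx
          add_mem' := by
            intro g₁ g₂ hg₁ hg₂ x hx
            rw [← add_assoc]
            exact hg₂ _ (hg₁ x hx)
          neg_mem' := by
            intro g hg x hx
            have himg : H.image (· + g) = H := by
              apply Finset.eq_of_subset_of_card_le
              · intro y hy
                obtain ⟨z, hz, rfl⟩ := Finset.mem_image.mp hy
                exact hg z hz
              · rw [Finset.card_image_of_injective _ (add_left_injective g)]
            have hx' : x ∈ H.image (· + g) := himg.symm ▸ hx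
            obtain ⟨y, hy, hye⟩ := Finset.mem_image.mp hx'
            have : x + -g = y := by rw [← hye]; abel
            rw [this]; exact hy } with hL
      have hBL : (B : Set G) ⊆ L := by
        intro b hb x hx
        have : x + b ∈ H + B := Finset.mem_add.mpr ⟨x, hx, b, hb, rfl⟩
        rwa [hHB] at this
      have hLtop : L = ⊤ := by
        have := AddSubgroup.closure_le L |>.mpr hBL
        rw [hcl] at this
        exact top_le_iff.mp this
      have hHuniv : H = univ := by
        apply Finset.eq_univ_of_forall
        intro g
        have hgL : g ∈ L := by rw [hLtop]; trivial
        have := hgL 0 hH0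
        simpa using this
      apply hHU
      rw [hHB, hHuniv]
    -- divisibility: |H| ∣ κ
    have hstable : ∀ p ∈ H, ∀ t ∈ H + B, p + t ∈ H + B := by
      intro p hp t ht
      obtain ⟨x, hx, b, hb, rfl⟩ := Finset.mem_add.mp ht
      rw [← add_assoc]
      exact Finset.mem_add.mpr ⟨p + x, hHc p hp x hx, b, hb, rfl⟩
    have hdvdHB : H.card ∣ (H + B).card := card_dvd_stable H hH0 hHc (H + B) hstable
    have hκdvd : H.card ∣ κ := by
      rw [hHcard] at hdvdHB
      exact (Nat.dvd_add_right (dvd_refl H.card)).mp hdvdHB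
    have hHκ : H.card ≤ κ := Nat.le_of_dvd (by omega) hκdvd
    -- |H + B| ≥ s
    have hHBge : s ≤ (H + B).card := by
      have hsub : B ⊆ H + B := fun b hb =>
        Finset.mem_add.mpr ⟨0, hH0, b, hb, zero_add b⟩
      have := Finset.card_le_card hsub
      omega
    -- minimality bounds
    have hBBne : (B + B).Nonempty := ⟨0, Finset.mem_add.mpr ⟨0, h0B, 0, h0B, add_zero 0⟩⟩
    have hk1 : B.card + κ ≤ (B + B).card := kap_le h0B ⟨⟨0, h0B⟩, hBBU⟩
    have hk2 : (B + B).card + κ ≤ (B + B + B).card := kap_le h0B ⟨hBBne, hBBBU⟩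
    -- conclude: 2κ ≤ s and 2κ ≥ s hence n = 6κ even
    have h2 : 2 ∣ n := by
      refine ⟨3 * κ, ?_⟩
      omega
    exact hnop 2 Nat.prime_two h2 (by norm_num)
  · -- non-generating case
    set K := AddSubgroup.closure (B : Set G) with hK
    have hsub : ((B + B + B : Finset G) : Set G) ⊆ (K : Set G) := by
      intro x hx
      rw [Finset.mem_coe] at hx
      obtain ⟨y, hy, c, hc, rfl⟩ := Finset.mem_add.mp hx
      obtain ⟨a, ha, b, hb, rfl⟩ := Finset.mem_add.mp hy
      exact K.add_mem (K.add_mem (AddSubgroup.subset_closure ha)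
        (AddSubgroup.subset_closure hb)) (AddSubgroup.subset_closure hc)
    have h1 : (B + B + B).card ≤ Nat.card K := by
      calc (B + B + B).card = ((B + B + B : Finset G) : Set G).ncard :=
            (Set.ncard_coe_finset _).symm
        _ ≤ (K : Set G).ncard := Set.ncard_le_ncard hsub (Set.toFinite _)
        _ = Nat.card K := by rw [← Nat.card_coe_set_eq]; rfl
    have hdvd : Nat.card K ∣ n := by
      have h := AddSubgroup.card_addSubgroup_dvd_card K
      rw [Nat.card_eq_fintype_card, Nat.card_eq_fintype_card] at h
      rw [Nat.card_eq_fintype_card]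
      exact h
    have hne : Nat.card K ≠ n := by
      intro h
      exact hcl (AddSubgroup.eq_top_of_card_eq K (by rw [h, hn, Nat.card_eq_fintype_card]))
    obtain ⟨d, hd⟩ := hdvd
    have hKpos : 0 < Nat.card K := Nat.card_pos
    have hd1 : d ≠ 1 := by intro h; rw [h, mul_one] at hd; exact hne hd.symm
    have hd2 : d ≠ 2 := by
      intro h
      have : 2 ∣ n := ⟨Nat.card K, by rw [hd, h]; ring⟩
      exact hnop 2 Nat.prime_two this (by norm_num)
    have hd0 : d ≠ 0 := by intro h; rw [h, mul_zero] at hd; omega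
    have hd3 : 3 ≤ d := by omega
    have : 3 * Nat.card K ≤ n := by
      rw [hd]
      calc 3 * Nat.card K ≤ d * Nat.card K := by
            exact Nat.mul_le_mul_right _ hd3
        _ = Nat.card K * d := Nat.mul_comm _ _
    omega
end

section
/- Let K be a finite abelian group of order d divisible by 3 with d ≥ 9 and no prime divisor of d congruent to 2 mod 3, let H be a subgroup of index 3 in K, h ∈ H, and g ∈ K \ H. Then A = (H \ {h}) ∪ {g} satisfies |A| = d/3 and 3A = K \ {h + 2g}, so |3A| = d − 1. -/
open Finset Pointwise Classical in
theorem stmt_17 {K : Type*} [AddCommGroup K] [Fintype K] [DecidableEq K]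
    (d : ℕ) (hd : Fintype.card K = d) (h3d : 3 ∣ d) (hd9 : 9 ≤ d)
    (hnop : ∀ q : ℕ, q.Prime → q ∣ d → q % 3 ≠ 2)
    (H : AddSubgroup K) (hH : H.index = 3)
    (h : K) (hh : h ∈ H) (g : K) (hg : g ∉ H) :
    let A : Finset K := insert g ((Finset.univ.filter (fun x => x ∈ H)).erase h)
    A.card = d / 3 ∧ A + A + A = Finset.univ \ {h + g + g} ∧
      (A + A + A).card = d - 1 := by
  intro A
  set Hf : Finset K := Finset.univ.filter (fun x => x ∈ H) with hHfdef
  have memHf : ∀ x : K, x ∈ Hf ↔ x ∈ H := by intro x; simp [hHfdef]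
  set B : Finset K := Hf.erase h with hBdef
  have memB : ∀ x : K, x ∈ B ↔ x ∈ H ∧ x ≠ h := by
    intro x; rw [hBdef, Finset.mem_erase, memHf]; tauto
  have memA : ∀ x : K, x ∈ A ↔ x = g ∨ (x ∈ H ∧ x ≠ h) := by
    intro x
    show x ∈ insert g B ↔ _
    rw [Finset.mem_insert, memB]
  -- card of Hf
  have cardHf : Hf.card = d / 3 := by
    have h1 : H.index * Nat.card H = Nat.card K := AddSubgroup.index_mul_card H
    simp only [Nat.card_eq_fintype_card] at h1
    rw [hH, hd] at h1
    have h2 : Hf.card = Fintype.card H := by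
      rw [Fintype.card_subtype]
    omega
  have cardHf3 : 3 ≤ Hf.card := by omega
  -- 3g ∈ H
  have h3g : g + g + g ∈ H := by
    have h0 := card_nsmul_eq_zero' (G := K ⧸ H) (x := (g : K ⧸ H))
    rw [show Nat.card (K ⧸ H) = 3 from hH] at h0
    have : ((g + g + g : K) : K ⧸ H) = 0 := by
      rw [show g + g + g = (3 : ℕ) • g by abel]
      push_cast
      exact h0
    exact (QuotientAddGroup.eq_zero_iff _).1 this
  have h2g : g + g ∉ H := fun hc => hg (by simpa using H.sub_mem h3g hc)
  -- B + B = Hf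
  have hBB : B + B = Hf := by
    apply Finset.Subset.antisymm
    · intro x hx
      rw [Finset.mem_add] at hx
      obtain ⟨a, ha, b, hb, rfl⟩ := hx
      exact (memHf _).2 (H.add_mem ((memB a).1 ha).1 ((memB b).1 hb).1)
    · intro x hx
      have hx' : x ∈ H := (memHf x).1 hx
      have hne : (B.erase (x - h)).Nonempty := by
        rw [← Finset.card_pos]
        have e1 : Hf.card - 1 ≤ B.card := Finset.pred_card_le_card_erase
        have e2 : B.card - 1 ≤ (B.erase (x - h)).card := Finset.pred_card_le_card_erase
        omega
      obtain ⟨a, ha⟩ := hne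
      rw [Finset.mem_erase] at ha
      obtain ⟨hane, haB⟩ := ha
      have haH := ((memB a).1 haB).1
      refine Finset.mem_add.2 ⟨a, haB, x - a, ?_, by abel⟩
      refine (memB _).2 ⟨H.sub_mem hx' haH, fun hc => hane ?_⟩
      rw [← hc]; abel
  have hBne : B.Nonempty := by
    rw [← Finset.card_pos]
    have e1 : Hf.card - 1 ≤ B.card := Finset.pred_card_le_card_erase
    omega
  have hBA : B ⊆ A := Finset.subset_insert _ _
  have hgA : g ∈ A := Finset.mem_insert_self _ _
  -- coset trichotomy
  have tri : ∀ x : K, x ∈ H ∨ x - g ∈ H ∨ x - (g + g) ∈ H := by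
    intro x
    haveI : Fintype (K ⧸ H) := Fintype.ofFinite _
    have hcard : Fintype.card (K ⧸ H) = 3 := by
      rw [← Nat.card_eq_fintype_card]; exact hH
    have hπg : (g : K ⧸ H) ≠ 0 := fun hc => hg ((QuotientAddGroup.eq_zero_iff _).1 hc)
    have hπ2g : (g : K ⧸ H) + (g : K ⧸ H) ≠ 0 := fun hc =>
      h2g ((QuotientAddGroup.eq_zero_iff _).1 (by rw [QuotientAddGroup.mk_add]; exact hc))
    have hdist : (g : K ⧸ H) ≠ (g : K ⧸ H) + (g : K ⧸ H) := fun hc => hπg (left_eq_add.1 hc)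
    have huniv : ({0, (g : K ⧸ H), (g : K ⧸ H) + (g : K ⧸ H)} : Finset (K ⧸ H)) =
        Finset.univ := by
      apply Finset.eq_univ_of_card
      rw [hcard]
      rw [Finset.card_insert_of_notMem (by simp [Ne.symm hπg, Ne.symm hπ2g]),
        Finset.card_insert_of_notMem (by simp [hdist]), Finset.card_singleton]
    have hx : (x : K ⧸ H) ∈ ({0, (g : K ⧸ H), (g : K ⧸ H) + (g : K ⧸ H)} : Finset (K ⧸ H)) := by
      rw [huniv]; exact Finset.mem_univ _
    simp only [Finset.mem_insert, Finset.mem_singleton] at hx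
    rcases hx with hx | hx | hx
    · exact Or.inl ((QuotientAddGroup.eq_zero_iff _).1 hx)
    · refine Or.inr (Or.inl ((QuotientAddGroup.eq_zero_iff _).1 ?_))
      rw [QuotientAddGroup.mk_sub, hx, sub_self]
    · refine Or.inr (Or.inr ((QuotientAddGroup.eq_zero_iff _).1 ?_))
      rw [QuotientAddGroup.mk_sub, QuotientAddGroup.mk_add, hx, sub_self]
  -- helper for extracting equalities from sums
  have solve : ∀ X Y L : K, L = h + g + g → X - Y = L - (h + g + g) → X = Y := by
    intro X Y L hL hk
    rw [hL, sub_self] at hk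
    exact sub_eq_zero.mp hk
  -- main set equality
  have main : A + A + A = Finset.univ \ {h + g + g} := by
    apply Finset.Subset.antisymm
    · intro x hx
      rw [Finset.mem_add] at hx
      obtain ⟨ab, hab, c, hc, rfl⟩ := hx
      rw [Finset.mem_add] at hab
      obtain ⟨a, ha, b, hb, rfl⟩ := hab
      rw [Finset.mem_sdiff, Finset.mem_singleton]
      refine ⟨Finset.mem_univ _, fun heq => ?_⟩
      rw [memA] at ha hb hc
      rcases ha with ha | ⟨haH, hane⟩ <;> rcases hb with hb | ⟨hbH, hbne⟩ <;>
        rcases hc with hc | ⟨hcH, hcne⟩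
      · rw [ha, hb, hc] at heq
        exact hg ((solve g h _ heq (by abel)) ▸ hh)
      · rw [ha, hb] at heq
        exact hcne (solve c h _ heq (by abel))
      · rw [ha, hc] at heq
        exact hbne (solve b h _ heq (by abel))
      · rw [ha] at heq
        exact hg ((solve (b + c - h) g _ heq (by abel)).symm ▸
          H.sub_mem (H.add_mem hbH hcH) hh)
      · rw [hb, hc] at heq
        exact hane (solve a h _ heq (by abel))
      · rw [hb] at heq
        exact hg ((solve (a + c - h) g _ heq (by abel)).symm ▸
          H.sub_mem (H.add_mem haH hcH) hh)
      · rw [hc] at heq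
        exact hg ((solve (a + b - h) g _ heq (by abel)).symm ▸
          H.sub_mem (H.add_mem haH hbH) hh)
      · exact h2g ((solve (a + b + c - h) (g + g) _ heq (by abel)).symm ▸
          H.sub_mem (H.add_mem (H.add_mem haH hbH) hcH) hh)
    · intro x hx
      rw [Finset.mem_sdiff, Finset.mem_singleton] at hx
      obtain ⟨-, hxne⟩ := hx
      rcases tri x with hxH | hxH | hxH
      · obtain ⟨c, hc⟩ := hBne
        have hm : x - c ∈ B + B := by
          rw [hBB, memHf]
          exact H.sub_mem hxH ((memB c).1 hc).1
        rw [Finset.mem_add] at hm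
        obtain ⟨a, ha, b, hb, hab⟩ := hm
        refine Finset.mem_add.2 ⟨a + b, Finset.mem_add.2 ⟨a, hBA ha, b, hBA hb, rfl⟩,
          c, hBA hc, by rw [hab]; abel⟩
      · have hm : x - g ∈ B + B := by rw [hBB, memHf]; exact hxH
        rw [Finset.mem_add] at hm
        obtain ⟨a, ha, b, hb, hab⟩ := hm
        refine Finset.mem_add.2 ⟨a + b, Finset.mem_add.2 ⟨a, hBA ha, b, hBA hb, rfl⟩,
          g, hgA, by rw [hab]; abel⟩
      · have hcB : x - (g + g) ∈ B := by
          refine (memB _).2 ⟨hxH, fun hc => hxne ?_⟩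
          rw [← hc]; abel
        refine Finset.mem_add.2 ⟨g + g, Finset.mem_add.2 ⟨g, hgA, g, hgA, rfl⟩,
          x - (g + g), hBA hcB, by abel⟩
  have hgB : g ∉ B := fun hc => hg ((memB g).1 hc).1
  have cardA : A.card = d / 3 := by
    show (insert g B).card = d / 3
    rw [Finset.card_insert_of_notMem hgB]
    have hBcard : B.card + 1 = Hf.card := Finset.card_erase_add_one ((memHf h).2 hh)
    omega
  refine ⟨cardA, main, ?_⟩
  rw [main, Finset.card_sdiff_of_subset (by simp), Finset.card_singleton, Finset.card_univ, hd]
end
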